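/- arXiv:1405.6758 — 9 statements merged into one kernel-verified Lean document; each statement's English description precedes it below -/
import Mathlib

section
/- If T : ℤ³ → ℚ (nonvanishing) satisfies the octahedron relation T(i,j,k+1)·T(i,j,k-1) = T(i,j+1,k)·T(i,j-1,k) + T(i+1,j,k)·T(i-1,j,k), then the quantities Y(i,j,k) := (T(i+1,j,k)·T(i-1,j,k))/(T(i,j+1,k)·T(i,j-1,k)) satisfy the Y-system relation Y(i,j,k+1)·Y(i,j,k-1) = ((1+Y(i+1,j,k))·(1+Y(i-1,j,k)))/((1+Y(i,j+1,k)⁻¹)·(1+Y(i,j-1,k)⁻¹)). -/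
theorem octahedron_to_Y_system
    (T : ℤ → ℤ → ℤ → ℚ)
    (hT : ∀ i j k : ℤ, T i j k ≠ 0)
    (hoct : ∀ i j k : ℤ,
      T i j (k+1) * T i j (k-1) =
        T i (j+1) k * T i (j-1) k + T (i+1) j k * T (i-1) j k)
    (Y : ℤ → ℤ → ℤ → ℚ)
    (hY : ∀ i j k : ℤ,
      Y i j k = (T (i+1) j k * T (i-1) j k) / (T i (j+1) k * T i (j-1) k)) :
    ∀ i j k : ℤ,
      Y i j (k+1) * Y i j (k-1) =
        ((1 + Y (i+1) j k) * (1 + Y (i-1) j k)) /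
          ((1 + (Y i (j+1) k)⁻¹) * (1 + (Y i (j-1) k)⁻¹)) := by
  have h1 : ∀ i j k : ℤ, 1 + Y i j k =
      (T i j (k+1) * T i j (k-1)) / (T i (j+1) k * T i (j-1) k) := by
    intro i j k
    rw [hY, hoct]
    field_simp [hT]
  have h2 : ∀ i j k : ℤ, 1 + (Y i j k)⁻¹ =
      (T i j (k+1) * T i j (k-1)) / (T (i+1) j k * T (i-1) j k) := by
    intro i j k
    rw [hY, inv_div, hoct]
    field_simp [hT]
    ring
  intro i j k
  rw [hY, hY, h1, h1, h2, h2]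
  field_simp [hT]
end

section
/- Desnanot–Jacobi identity: for an n×n matrix M with n ≥ 2 over a commutative ring, det(M)·det(M with both first and last rows and first and last columns deleted) = det(M with first row and first column deleted)·det(M with last row and last column deleted) − det(M with first row and last column deleted)·det(M with last row and first column deleted). -/
open Matrix

namespace DJaux

variable {R : Type*} [CommRing R]

/-- The reindexing equiv putting positions 0 and last first. -/
noncomputable def e (n : ℕ) : Fin 2 ⊕ Fin n ≃ Fin (n+2) :=
  Equiv.ofBijective (Sum.elim ![0, Fin.last (n+1)] (fun k => (k.castSucc).succ)) <| by
    rw [Fintype.bijective_iff_injective_and_card]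
    constructor
    · rintro (a | a) (b | b) h
      · fin_cases a <;> fin_cases b <;> simp_all [Fin.ext_iff]
      · fin_cases a <;> simp_all [Fin.ext_iff] <;> omega
      · fin_cases b <;> simp_all [Fin.ext_iff] <;> omega
      · simpa [Fin.ext_iff] using congrArg Fin.val h
    · simp [Nat.add_comm]

variable {n : ℕ}

@[simp] lemma e_inl0 : e n (Sum.inl 0) = 0 := by simp [e]
@[simp] lemma e_inl1 : e n (Sum.inl 1) = Fin.last (n+1) := by simp [e]
@[simp] lemma e_inr (k : Fin n) : e n (Sum.inr k) = (k.castSucc).succ := rfl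

lemma mid_ne_zero (k : Fin n) : (k.castSucc).succ ≠ 0 := Fin.succ_ne_zero _
lemma mid_ne_last (k : Fin n) : (k.castSucc).succ ≠ Fin.last (n+1) := by
  rw [← Fin.succ_last]
  exact fun h => (Fin.castSucc_lt_last k).ne (Fin.succ_injective _ h)

/-- The auxiliary matrix: identity with first and last columns replaced by those
of the adjugate. -/
noncomputable def N (M : Matrix (Fin (n+2)) (Fin (n+2)) R) :
    Matrix (Fin (n+2)) (Fin (n+2)) R :=
  Matrix.of fun i j =>
    if j = 0 then adjugate M i 0
    else if j = Fin.last (n+1) then adjugate M i (Fin.last (n+1))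
    else if i = j then 1 else 0

/-- `M * N M`. -/
noncomputable def P (M : Matrix (Fin (n+2)) (Fin (n+2)) R) :
    Matrix (Fin (n+2)) (Fin (n+2)) R :=
  Matrix.of fun i j =>
    if j = 0 then (if i = 0 then M.det else 0)
    else if j = Fin.last (n+1) then (if i = Fin.last (n+1) then M.det else 0)
    else M i j

lemma mul_N (M : Matrix (Fin (n+2)) (Fin (n+2)) R) : M * N M = P M := by
  ext i j
  rw [mul_apply]
  by_cases h0 : j = 0
  · subst h0
    have : ∀ k, M i k * N M k 0 = M i k * adjugate M k 0 := by
      intro k; simp [N]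
    rw [Finset.sum_congr rfl fun k _ => this k, ← Matrix.mul_apply, mul_adjugate]
    simp [P, Matrix.one_apply]
  · by_cases hl : j = Fin.last (n+1)
    · subst hl
      have : ∀ k, M i k * N M k (Fin.last (n+1)) =
          M i k * adjugate M k (Fin.last (n+1)) := by
        intro k; simp [N, (Fin.last_pos (n := n+1)).ne']
      rw [Finset.sum_congr rfl fun k _ => this k, ← Matrix.mul_apply, mul_adjugate]
      simp [P, h0, Matrix.one_apply]
    · have : ∀ k, M i k * N M k j = if k = j then M i k else 0 := by
        intro k; simp [N, h0, hl]
      rw [Finset.sum_congr rfl fun k _ => this k]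
      simp [P, h0, hl]


lemma det_P (M : Matrix (Fin (n+2)) (Fin (n+2)) R) :
    (P M).det = M.det ^ 2 *
      (M.submatrix (Fin.succ ∘ Fin.castSucc) (Fin.succ ∘ Fin.castSucc)).det := by
  rw [← det_submatrix_equiv_self (e n)]
  have : (P M).submatrix (e n) (e n) =
      Matrix.fromBlocks (M.det • (1 : Matrix (Fin 2) (Fin 2) R))
        (Matrix.of fun (a : Fin 2) (k : Fin n) => P M (e n (.inl a)) ((k.castSucc).succ))
        0 (M.submatrix (Fin.succ ∘ Fin.castSucc) (Fin.succ ∘ Fin.castSucc)) := by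
    ext i j
    rcases i with a | a <;> rcases j with b | b
    · fin_cases a <;> fin_cases b <;>
        simp [P, Matrix.one_apply, (Fin.last_pos (n := n+1)).ne']
    · rfl
    · fin_cases b <;>
        simp [P, mid_ne_zero a, mid_ne_last a, (Fin.last_pos (n := n+1)).ne']
    · simp [P, mid_ne_zero b, mid_ne_last b]
  rw [this, det_fromBlocks_zero₂₁, det_smul, det_one]
  simp [Fintype.card_fin, sq]

lemma det_N (M : Matrix (Fin (n+2)) (Fin (n+2)) R) :
    (N M).det =
      (M.submatrix Fin.succ Fin.succ).det * (M.submatrix Fin.castSucc Fin.castSucc).det -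
        (M.submatrix Fin.succ Fin.castSucc).det * (M.submatrix Fin.castSucc Fin.succ).det := by
  rw [← det_submatrix_equiv_self (e n)]
  have : (N M).submatrix (e n) (e n) =
      Matrix.fromBlocks
        !![adjugate M 0 0, adjugate M 0 (Fin.last (n+1));
           adjugate M (Fin.last (n+1)) 0, adjugate M (Fin.last (n+1)) (Fin.last (n+1))]
        0
        (Matrix.of fun (k : Fin n) (a : Fin 2) => N M ((k.castSucc).succ) (e n (.inl a)))
        1 := by
    ext i j
    rcases i with a | a <;> rcases j with b | b
    · fin_cases a <;> fin_cases b <;>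
        simp [N, (Fin.last_pos (n := n+1)).ne']
    · fin_cases a <;>
        simp [N, (mid_ne_zero b).symm, (mid_ne_last b).symm, mid_ne_zero b, mid_ne_last b,
          (Fin.last_pos (n := n+1)).ne']
    · rfl
    · simp [N, Matrix.one_apply, mid_ne_zero b, mid_ne_last b,
        (Fin.succ_injective _).eq_iff, Fin.castSucc_inj]
  rw [this, det_fromBlocks_zero₁₂, det_one, mul_one, Matrix.det_fin_two_of]
  rw [adjugate_fin_succ_eq_det_submatrix, adjugate_fin_succ_eq_det_submatrix,
    adjugate_fin_succ_eq_det_submatrix, adjugate_fin_succ_eq_det_submatrix]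
  simp only [Fin.succAbove_zero, Fin.succAbove_last, Fin.val_zero, Fin.val_last]
  have h1 : ((-1 : R)) ^ ((n+1) + (n+1)) = 1 := by
    rw [show (n+1)+(n+1) = 2*(n+1) by ring, pow_mul, neg_one_sq, one_pow]
  have h2 : ((-1 : R)) ^ (n * 2) = 1 := by
    rw [pow_mul', neg_one_sq, one_pow]
  simp [h1]
  rw [mul_mul_mul_comm, ← pow_add, h1, one_mul, mul_comm]

lemma key (M : Matrix (Fin (n+2)) (Fin (n+2)) R) :
    M.det * ((M.submatrix Fin.succ Fin.succ).det *
        (M.submatrix Fin.castSucc Fin.castSucc).det -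
      (M.submatrix Fin.succ Fin.castSucc).det *
        (M.submatrix Fin.castSucc Fin.succ).det) =
    M.det * (M.det *
      (M.submatrix (Fin.succ ∘ Fin.castSucc) (Fin.succ ∘ Fin.castSucc)).det) := by
  calc M.det * _ = M.det * (N M).det := by rw [det_N]
    _ = (M * N M).det := (det_mul _ _).symm
    _ = (P M).det := by rw [mul_N]
    _ = _ := by rw [det_P]; ring

end DJaux

open DJaux in
/-- Desnanot–Jacobi identity (Dodgson condensation). Here `M` is an
`(n+2) × (n+2)` matrix, i.e. of size `≥ 2`; rows/columns are deleted via
`Fin.succ` (delete the first) and `Fin.castSucc` (delete the last). -/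
theorem desnanot_jacobi {R : Type*} [CommRing R] (n : ℕ)
    (M : Matrix (Fin (n+2)) (Fin (n+2)) R) :
    M.det * (M.submatrix (Fin.succ ∘ Fin.castSucc) (Fin.succ ∘ Fin.castSucc)).det =
      (M.submatrix Fin.succ Fin.succ).det * (M.submatrix Fin.castSucc Fin.castSucc).det -
        (M.submatrix Fin.succ Fin.castSucc).det * (M.submatrix Fin.castSucc Fin.succ).det := by
  let X := mvPolynomialX (Fin (n+2)) (Fin (n+2)) ℤ
  have hX : X.det ≠ 0 := det_mvPolynomialX_ne_zero _ _
  have hgen : X.det *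
      (X.submatrix (Fin.succ ∘ Fin.castSucc) (Fin.succ ∘ Fin.castSucc)).det =
      (X.submatrix Fin.succ Fin.succ).det *
          (X.submatrix Fin.castSucc Fin.castSucc).det -
        (X.submatrix Fin.succ Fin.castSucc).det *
          (X.submatrix Fin.castSucc Fin.succ).det :=
    (mul_left_cancel₀ hX (key X)).symm
  let φ : MvPolynomial (Fin (n+2) × Fin (n+2)) ℤ →+* R :=
    MvPolynomial.eval₂Hom (Int.castRingHom R) fun p => M p.1 p.2
  have hmap : X.map φ = M := mvPolynomialX_map_eval₂ _ M
  have hdet : ∀ (m : ℕ) (r c : Fin m → Fin (n+2)),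
      φ (X.submatrix r c).det = (M.submatrix r c).det := by
    intro m r c
    rw [RingHom.map_det, RingHom.mapMatrix_apply, ← Matrix.submatrix_map, hmap]
  have hd : φ X.det = M.det := by rw [RingHom.map_det, RingHom.mapMatrix_apply, hmap]
  have := congrArg φ hgen
  rw [_root_.map_mul, map_sub, _root_.map_mul, _root_.map_mul, hd,
    hdet n (Fin.succ ∘ Fin.castSucc) (Fin.succ ∘ Fin.castSucc), hdet (n+1) Fin.succ Fin.succ,
    hdet (n+1) Fin.castSucc Fin.castSucc, hdet (n+1) Fin.succ Fin.castSucc,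
    hdet (n+1) Fin.castSucc Fin.succ] at this
  exact this
end

section
/- Let T satisfy the octahedron relation with boundary condition T(0,j,k) = 1. Define for each i ≥ 1 the i×i matrix M⁽ⁱ⁾(j,k) with entries (M⁽ⁱ⁾(j,k))_{a,b} = T(1, j - a + b, k - i + 1 + a + b - 2) for 1 ≤ a,b ≤ i (i.e., entry (a,b) equals x(j+b-a, k-i+a+b-1) where x(j,k) = T(1,j,k)). Then T(i,j,k) = det M⁽ⁱ⁾(j,k) for all i ≥ 0 (with the convention that the 0×0 determinant is 1), assuming all T(i,j,k) are nonzero for i in the relevant range. -/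
open Matrix

namespace TSystemAux

/-- Reindexing equivalence putting the two "corner" indices of `Fin (n+2)` last. -/
def eBig (n : ℕ) : (Fin n ⊕ Fin 2) ≃ Fin (n+2) where
  toFun := Sum.elim (fun a => ⟨a.val + 1, by omega⟩)
    (fun t => if t.val = 0 then ⟨0, by omega⟩ else ⟨n+1, by omega⟩)
  invFun := fun j => if h : j.val = 0 then Sum.inr 0 else
    if h2 : j.val = n+1 then Sum.inr 1 else Sum.inl ⟨j.val - 1, by omega⟩
  left_inv := by
    rintro (a | t)
    · have := a.isLt
      dsimp only [Sum.elim_inl]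
      split_ifs <;> simp_all <;> omega
    · have := t.isLt
      dsimp only [Sum.elim_inr]
      rcases Fin.exists_fin_two.mp ⟨t, rfl⟩ with h | h <;> subst h <;>
        · split_ifs <;> simp_all [Fin.ext_iff]
  right_inv := by
    intro j
    have := j.isLt
    dsimp only
    split_ifs with h0 h1 <;> apply Fin.ext <;> simp_all <;> omega

def eS (n : ℕ) : (Fin n ⊕ Fin 1) ≃ Fin (n+1) where
  toFun := Sum.elim (fun a => ⟨a.val, by omega⟩) (fun _ => ⟨n, by omega⟩)
  invFun := fun j => if h : j.val = n then Sum.inr 0 else Sum.inl ⟨j.val, by omega⟩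
  left_inv := by
    rintro (a | t)
    · have := a.isLt
      dsimp only [Sum.elim_inl]
      split_ifs <;> simp_all
    · dsimp only [Sum.elim_inr]
      rw [Subsingleton.elim t 0]
      split_ifs <;> simp_all
  right_inv := by
    intro j
    have := j.isLt
    dsimp only
    split_ifs <;> simp_all [Fin.ext_iff, Subsingleton.elim _ (0 : Fin 1)]

def eC (n : ℕ) : (Fin n ⊕ Fin 1) ≃ Fin (n+1) where
  toFun := Sum.elim (fun a => ⟨a.val + 1, by omega⟩) (fun _ => ⟨0, by omega⟩)
  invFun := fun j => if h : j.val = 0 then Sum.inr 0 else Sum.inl ⟨j.val - 1, by omega⟩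
  left_inv := by
    rintro (a | t)
    · dsimp only [Sum.elim_inl]
      split_ifs <;> simp_all
    · dsimp only [Sum.elim_inr]
      rw [Subsingleton.elim t 0]
      split_ifs <;> simp_all
  right_inv := by
    intro j
    have := j.isLt
    dsimp only
    split_ifs <;> apply Fin.ext <;> simp_all <;> omega

lemma eBig_inl {n : ℕ} (a : Fin n) : ((eBig n (Sum.inl a)) : ℕ) = a.val + 1 := rfl
lemma eBig_inr0 {n : ℕ} : ((eBig n (Sum.inr 0)) : ℕ) = 0 := rfl
lemma eBig_inr1 {n : ℕ} : ((eBig n (Sum.inr 1)) : ℕ) = n + 1 := rfl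
lemma eS_inl {n : ℕ} (a : Fin n) : ((eS n (Sum.inl a)) : ℕ) = a.val := rfl
lemma eS_inr {n : ℕ} (t : Fin 1) : ((eS n (Sum.inr t)) : ℕ) = n := rfl
lemma eC_inl {n : ℕ} (a : Fin n) : ((eC n (Sum.inl a)) : ℕ) = a.val + 1 := rfl
lemma eC_inr {n : ℕ} (t : Fin 1) : ((eC n (Sum.inr t)) : ℕ) = 0 := rfl

variable {K : Type*} [Field K]

lemma det_fromBlocks_one {n : ℕ} (M : Matrix (Fin n) (Fin n) K) [Invertible M]
    (B : Matrix (Fin n) (Fin 2) K) (C : Matrix (Fin 2) (Fin n) K) (D : Matrix (Fin 2) (Fin 2) K)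
    (r c : Fin 2) :
    (fromBlocks M (Matrix.of fun a (_ : Fin 1) => B a c)
        (Matrix.of fun (_ : Fin 1) b => C r b)
        (Matrix.of fun (_ : Fin 1) (_ : Fin 1) => D r c)).det
      = M.det * (D - C * ⅟M * B) r c := by
  rw [Matrix.det_fromBlocks₁₁]
  congr 1
  rw [Matrix.det_fin_one]
  simp [Matrix.sub_apply, Matrix.mul_apply, Finset.sum_mul]

lemma blockDJ {n : ℕ} (M : Matrix (Fin n) (Fin n) K) [Invertible M]
    (B : Matrix (Fin n) (Fin 2) K) (C : Matrix (Fin 2) (Fin n) K) (D : Matrix (Fin 2) (Fin 2) K) :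
    (fromBlocks M B C D).det * M.det =
      (fromBlocks M (Matrix.of fun a (_ : Fin 1) => B a 1)
        (Matrix.of fun (_ : Fin 1) b => C 1 b)
        (Matrix.of fun (_ : Fin 1) (_ : Fin 1) => D 1 1)).det *
      (fromBlocks M (Matrix.of fun a (_ : Fin 1) => B a 0)
        (Matrix.of fun (_ : Fin 1) b => C 0 b)
        (Matrix.of fun (_ : Fin 1) (_ : Fin 1) => D 0 0)).det -
      (fromBlocks M (Matrix.of fun a (_ : Fin 1) => B a 0)
        (Matrix.of fun (_ : Fin 1) b => C 1 b)
        (Matrix.of fun (_ : Fin 1) (_ : Fin 1) => D 1 0)).det *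
      (fromBlocks M (Matrix.of fun a (_ : Fin 1) => B a 1)
        (Matrix.of fun (_ : Fin 1) b => C 0 b)
        (Matrix.of fun (_ : Fin 1) (_ : Fin 1) => D 0 1)).det := by
  rw [Matrix.det_fromBlocks₁₁, det_fromBlocks_one, det_fromBlocks_one, det_fromBlocks_one,
    det_fromBlocks_one, Matrix.det_fin_two]
  ring

lemma det_mixed {n : ℕ} (X : Matrix (Fin (n+1)) (Fin (n+1)) K)
    (Y : Matrix (Fin (n+1)) (Fin (n+1)) K)
    (F : Matrix (Fin n ⊕ Fin 1) (Fin n ⊕ Fin 1) K)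
    (G : Matrix (Fin n ⊕ Fin 1) (Fin n ⊕ Fin 1) K)
    (hF : F = X.submatrix (eS n) (eC n)) (hG : G = Y.submatrix (eC n) (eS n)) :
    F.det * G.det = X.det * Y.det := by
  set τ : Equiv.Perm (Fin n ⊕ Fin 1) := (eC n).trans (eS n).symm with hτ
  have hF2 : F = (X.submatrix (eS n) (eS n)).submatrix id τ := by
    rw [hF]; ext i j; simp [τ, Matrix.submatrix_apply]
  have hG2 : G = (Y.submatrix (eC n) (eC n)).submatrix id τ.symm := by
    rw [hG]; ext i j; simp [τ, Matrix.submatrix_apply]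
  rw [hF2, hG2, Matrix.det_permute', Matrix.det_permute',
    Matrix.det_submatrix_equiv_self, Matrix.det_submatrix_equiv_self]
  have hs : (Equiv.Perm.sign τ.symm : K) = (Equiv.Perm.sign τ : K) := by
    rw [Equiv.Perm.sign_symm]
  rw [hs]
  have h1 : ((Equiv.Perm.sign τ : ℤˣ) : K) * ((Equiv.Perm.sign τ : ℤˣ) : K) = 1 := by
    rcases Int.units_eq_one_or (Equiv.Perm.sign τ) with h | h <;> rw [h] <;> norm_num
  calc (Equiv.Perm.sign τ : K) * X.det * ((Equiv.Perm.sign τ : K) * Y.det)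
      = ((Equiv.Perm.sign τ : K) * (Equiv.Perm.sign τ : K)) * (X.det * Y.det) := by ring
    _ = X.det * Y.det := by rw [h1]; ring

/-- Desnanot–Jacobi identity, assuming the central minor is invertible. -/
lemma desnanot_jacobi {n : ℕ} (A : Matrix (Fin (n+2)) (Fin (n+2)) K)
    (hM : IsUnit (A.submatrix (fun a : Fin n => Fin.castSucc a.succ)
      (fun a : Fin n => Fin.castSucc a.succ)).det) :
    A.det * (A.submatrix (fun a : Fin n => Fin.castSucc a.succ)
        (fun a : Fin n => Fin.castSucc a.succ)).det
    = (A.submatrix Fin.succ Fin.succ).det * (A.submatrix Fin.castSucc Fin.castSucc).det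
      - (A.submatrix Fin.succ Fin.castSucc).det * (A.submatrix Fin.castSucc Fin.succ).det := by
  set ι : Fin n → Fin (n+2) := fun a => Fin.castSucc a.succ with hι
  set M := A.submatrix ι ι with hMdef
  haveI : Invertible M := M.invertibleOfIsUnitDet hM
  set B : Matrix (Fin n) (Fin 2) K :=
    Matrix.of (fun a t => A (ι a) (eBig n (Sum.inr t))) with hB
  set C : Matrix (Fin 2) (Fin n) K :=
    Matrix.of (fun t a => A (eBig n (Sum.inr t)) (ι a)) with hC
  set D : Matrix (Fin 2) (Fin 2) K :=
    Matrix.of (fun s t => A (eBig n (Sum.inr s)) (eBig n (Sum.inr t))) with hD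
  have key := blockDJ M B C D
  have h1 : fromBlocks M B C D = A.submatrix (eBig n) (eBig n) := by
    ext (a | t) (b | s) <;>
      simp only [fromBlocks_apply₁₁, fromBlocks_apply₁₂, fromBlocks_apply₂₁,
        fromBlocks_apply₂₂, Matrix.submatrix_apply, hMdef, hB, hC, hD, Matrix.of_apply] <;>
      congr 1 <;> exact Fin.ext (by simp [hι, eBig_inl])
  have h2 : (fromBlocks M (Matrix.of fun a (_ : Fin 1) => B a 1)
        (Matrix.of fun (_ : Fin 1) b => C 1 b)
        (Matrix.of fun (_ : Fin 1) (_ : Fin 1) => D 1 1))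
      = (A.submatrix Fin.succ Fin.succ).submatrix (eS n) (eS n) := by
    ext (a | t) (b | s) <;>
      simp only [fromBlocks_apply₁₁, fromBlocks_apply₁₂, fromBlocks_apply₂₁,
        fromBlocks_apply₂₂, Matrix.submatrix_apply, hMdef, hB, hC, hD, Matrix.of_apply] <;>
      congr 1 <;>
      exact Fin.ext (by simp [hι, eBig_inl, eBig_inr1, eS_inl, eS_inr, Fin.val_succ])
  have h3 : (fromBlocks M (Matrix.of fun a (_ : Fin 1) => B a 0)
        (Matrix.of fun (_ : Fin 1) b => C 0 b)
        (Matrix.of fun (_ : Fin 1) (_ : Fin 1) => D 0 0))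
      = (A.submatrix Fin.castSucc Fin.castSucc).submatrix (eC n) (eC n) := by
    ext (a | t) (b | s) <;>
      simp only [fromBlocks_apply₁₁, fromBlocks_apply₁₂, fromBlocks_apply₂₁,
        fromBlocks_apply₂₂, Matrix.submatrix_apply, hMdef, hB, hC, hD, Matrix.of_apply] <;>
      congr 1 <;>
      exact Fin.ext (by simp [hι, eBig_inl, eBig_inr0, eC_inl, eC_inr])
  have h4 : (fromBlocks M (Matrix.of fun a (_ : Fin 1) => B a 0)
        (Matrix.of fun (_ : Fin 1) b => C 1 b)
        (Matrix.of fun (_ : Fin 1) (_ : Fin 1) => D 1 0))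
      = (A.submatrix Fin.succ Fin.castSucc).submatrix (eS n) (eC n) := by
    ext (a | t) (b | s) <;>
      simp only [fromBlocks_apply₁₁, fromBlocks_apply₁₂, fromBlocks_apply₂₁,
        fromBlocks_apply₂₂, Matrix.submatrix_apply, hMdef, hB, hC, hD, Matrix.of_apply] <;>
      congr 1 <;>
      exact Fin.ext (by
        simp [hι, eBig_inl, eBig_inr0, eBig_inr1, eS_inl, eS_inr, eC_inl, eC_inr, Fin.val_succ])
  have h5 : (fromBlocks M (Matrix.of fun a (_ : Fin 1) => B a 1)
        (Matrix.of fun (_ : Fin 1) b => C 0 b)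
        (Matrix.of fun (_ : Fin 1) (_ : Fin 1) => D 0 1))
      = (A.submatrix Fin.castSucc Fin.succ).submatrix (eC n) (eS n) := by
    ext (a | t) (b | s) <;>
      simp only [fromBlocks_apply₁₁, fromBlocks_apply₁₂, fromBlocks_apply₂₁,
        fromBlocks_apply₂₂, Matrix.submatrix_apply, hMdef, hB, hC, hD, Matrix.of_apply] <;>
      congr 1 <;>
      exact Fin.ext (by
        simp [hι, eBig_inl, eBig_inr0, eBig_inr1, eS_inl, eS_inr, eC_inl, eC_inr, Fin.val_succ])
  rw [h1, h2, h3, Matrix.det_submatrix_equiv_self, Matrix.det_submatrix_equiv_self,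
    Matrix.det_submatrix_equiv_self,
    det_mixed (A.submatrix Fin.succ Fin.castSucc) (A.submatrix Fin.castSucc Fin.succ) _ _ h4 h5]
    at key
  exact key

end TSystemAux

open TSystemAux in
/-- Solutions of the octahedron relation with boundary `T 0 j k = 1` are
determinants of Dodgson-type matrices in the variables `x j k = T 1 j k`:
the `i×i` matrix has `(a,b)` entry (0-indexed) `x (j+b-a) (k-i+a+b+1)`. -/
theorem T_system_determinant_solution
    (T : ℤ → ℤ → ℤ → ℚ)
    (hoct : ∀ i j k : ℤ, 0 ≤ i →
      T i j (k+1) * T i j (k-1) =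
        T i (j+1) k * T i (j-1) k + T (i+1) j k * T (i-1) j k)
    (h0 : ∀ j k : ℤ, T 0 j k = 1)
    (hnz : ∀ i j k : ℤ, 0 ≤ i → T i j k ≠ 0) :
    ∀ (i : ℕ) (j k : ℤ),
      T (i : ℤ) j k =
        (Matrix.of fun a b : Fin i =>
          T 1 (j + (b : ℤ) - (a : ℤ)) (k - (i : ℤ) + (a : ℤ) + (b : ℤ) + 1)).det := by
  set mat : ∀ i : ℕ, ℤ → ℤ → Matrix (Fin i) (Fin i) ℚ := fun i j k =>
    Matrix.of fun a b : Fin i =>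
      T 1 (j + (b : ℤ) - (a : ℤ)) (k - (i : ℤ) + (a : ℤ) + (b : ℤ) + 1) with hmat
  have main : ∀ i : ℕ, (∀ j k, T (i : ℤ) j k = (mat i j k).det) ∧
      (∀ j k, T ((i+1 : ℕ) : ℤ) j k = (mat (i+1) j k).det) := by
    intro i
    induction i with
    | zero =>
      constructor
      · intro j k
        rw [Matrix.det_fin_zero]
        simpa using h0 j k
      · intro j k
        rw [Matrix.det_fin_one]
        simp only [hmat, Matrix.of_apply]
        norm_num
    | succ n ih =>
      refine ⟨ih.2, ?_⟩
      intro j k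
      set A := mat (n+2) j k with hA
      have hint : A.submatrix (fun a : Fin n => Fin.castSucc a.succ)
          (fun a : Fin n => Fin.castSucc a.succ) = mat n j k := by
        ext a b
        simp only [hA, hmat, Matrix.submatrix_apply, Matrix.of_apply]
        congr 1 <;> simp [Fin.coe_castSucc, Fin.val_succ] <;> push_cast <;> ring
      have hss : A.submatrix Fin.succ Fin.succ = mat (n+1) j (k+1) := by
        ext a b
        simp only [hA, hmat, Matrix.submatrix_apply, Matrix.of_apply]
        congr 1 <;> simp [Fin.val_succ] <;> push_cast <;> ring
      have hcc : A.submatrix Fin.castSucc Fin.castSucc = mat (n+1) j (k-1) := by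
        ext a b
        simp only [hA, hmat, Matrix.submatrix_apply, Matrix.of_apply]
        congr 1 <;> simp [Fin.coe_castSucc] <;> push_cast <;> ring
      have hsc : A.submatrix Fin.succ Fin.castSucc = mat (n+1) (j-1) k := by
        ext a b
        simp only [hA, hmat, Matrix.submatrix_apply, Matrix.of_apply]
        congr 1 <;> simp [Fin.coe_castSucc, Fin.val_succ] <;> push_cast <;> ring
      have hcs : A.submatrix Fin.castSucc Fin.succ = mat (n+1) (j+1) k := by
        ext a b
        simp only [hA, hmat, Matrix.submatrix_apply, Matrix.of_apply]
        congr 1 <;> simp [Fin.coe_castSucc, Fin.val_succ] <;> push_cast <;> ring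
      have hMunit : IsUnit (A.submatrix (fun a : Fin n => Fin.castSucc a.succ)
          (fun a : Fin n => Fin.castSucc a.succ)).det := by
        rw [hint, ← ih.1 j k]
        exact (hnz n j k (by positivity)).isUnit
      have dj := desnanot_jacobi A hMunit
      rw [hint, hss, hcc, hsc, hcs, ← ih.1 j k, ← ih.2 j (k+1), ← ih.2 j (k-1),
        ← ih.2 (j-1) k, ← ih.2 (j+1) k] at dj
      have oct := hoct ((n+1 : ℕ) : ℤ) j k (by positivity)
      have hcast1 : ((n+1 : ℕ) : ℤ) + 1 = ((n+2 : ℕ) : ℤ) := by push_cast; ring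
      have hcast2 : ((n+1 : ℕ) : ℤ) - 1 = ((n : ℕ) : ℤ) := by push_cast; ring
      rw [hcast1, hcast2] at oct
      rw [oct] at dj
      have hTn : T ((n : ℕ) : ℤ) j k ≠ 0 := hnz _ j k (by positivity)
      have : A.det * T ((n : ℕ) : ℤ) j k = T ((n+2 : ℕ) : ℤ) j k * T ((n : ℕ) : ℤ) j k := by
        rw [dj]; ring
      exact (mul_right_cancel₀ hTn this).symm
  intro i j k
  exact (main i).1 j k
end

section
/- Let x : ℤ × ℤ → ℚ and suppose for every j,k the (d+2)×(d+2) matrix M(j,k) with entries M(j,k)_{a,b} = x(j+b-a, k-(d+1)+a+b) (0 ≤ a,b ≤ d+1) has determinant 0 while every solid (d+1)×(d+1) submatrix of consecutive rows/columns has determinant 1. Then there exist coefficients c₁(s), …, c_d(s) depending only on s = j+k such that for all j,k with j+k = s: x(j,k−d) + Σ_{i=1}^{d} (−1)^i c_i(s)·x(j+i, k+i−d) − (−1)^d x(j+d+1, k+1) = 0. -/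
namespace ConservedAux

lemma neg_one_pow_shift (n b : ℕ) : (-1:ℚ)^n * (-1:ℚ)^(n+b) = (-1:ℚ)^b := by
  rw [pow_add, ← mul_assoc, ← pow_add, Even.neg_one_pow ⟨n, rfl⟩, one_mul]

lemma cofactor_top {d : ℕ} (N : Matrix (Fin (d+2)) (Fin (d+2)) ℚ) (hdet : N.det = 0)
    (a : Fin (d+2)) :
    ∑ c : Fin (d+2), (-1:ℚ)^(c:ℕ) * N a c * (N.submatrix Fin.succ c.succAbove).det = 0 := by
  have h0 : (N.updateRow 0 (N a)).det = 0 := by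
    rcases eq_or_ne a 0 with rfl | ha
    · rw [Matrix.updateRow_eq_self]; exact hdet
    · refine Matrix.det_zero_of_row_eq (Ne.symm ha) ?_
      rw [Matrix.updateRow_self, Matrix.updateRow_ne ha]
  calc ∑ c : Fin (d+2), (-1:ℚ)^(c:ℕ) * N a c * (N.submatrix Fin.succ c.succAbove).det
      = (N.updateRow 0 (N a)).det := by
        rw [Matrix.det_succ_row_zero]
        refine Finset.sum_congr rfl fun c _ => ?_
        rw [Matrix.updateRow_self, ← Fin.succAbove_zero, Matrix.submatrix_updateRow_succAbove]
    _ = 0 := h0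

lemma cofactor_bot {d : ℕ} (N : Matrix (Fin (d+2)) (Fin (d+2)) ℚ) (hdet : N.det = 0)
    (a : Fin (d+2)) :
    ∑ c : Fin (d+2), (-1:ℚ)^(c:ℕ) * N a c * (N.submatrix Fin.castSucc c.succAbove).det = 0 := by
  have h0 : (N.updateRow (Fin.last (d+1)) (N a)).det = 0 := by
    rcases eq_or_ne a (Fin.last (d+1)) with rfl | ha
    · rw [Matrix.updateRow_eq_self]; exact hdet
    · refine Matrix.det_zero_of_row_eq (Ne.symm ha) ?_
      rw [Matrix.updateRow_self, Matrix.updateRow_ne ha]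
  have hexp := Matrix.det_succ_row (N.updateRow (Fin.last (d+1)) (N a)) (Fin.last (d+1))
  rw [h0] at hexp
  simp only [Matrix.updateRow_self, Matrix.submatrix_updateRow_succAbove] at hexp
  simp only [Fin.succAbove_last, Fin.val_last] at hexp
  calc ∑ c : Fin (d+2), (-1:ℚ)^(c:ℕ) * N a c * (N.submatrix Fin.castSucc c.succAbove).det
      = (-1:ℚ)^(d+1) * ∑ c : Fin (d+2),
          (-1:ℚ)^((d+1)+(c:ℕ)) * N a c * (N.submatrix Fin.castSucc c.succAbove).det := by
        rw [Finset.mul_sum]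
        refine Finset.sum_congr rfl fun c _ => ?_
        rw [← mul_assoc, ← mul_assoc, neg_one_pow_shift]
    _ = 0 := by rw [← hexp, mul_zero]

lemma minor_top_eq_bot {d : ℕ} (N : Matrix (Fin (d+2)) (Fin (d+2)) ℚ)
    (hdet : N.det = 0)
    (h1 : (N.submatrix Fin.castSucc Fin.succ).det = 1)
    (h2 : (N.submatrix Fin.succ Fin.succ).det = 1)
    (b : Fin (d+2)) :
    (N.submatrix Fin.succ b.succAbove).det = (N.submatrix Fin.castSucc b.succAbove).det := by
  have hnull : ∀ a : Fin (d+2), ∑ c : Fin (d+2), N a c * ((-1:ℚ)^(c:ℕ) *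
      ((N.submatrix Fin.succ c.succAbove).det - (N.submatrix Fin.castSucc c.succAbove).det)) = 0 := by
    intro a
    have ht := cofactor_top N hdet a
    have hb := cofactor_bot N hdet a
    calc ∑ c : Fin (d+2), N a c * ((-1:ℚ)^(c:ℕ) *
          ((N.submatrix Fin.succ c.succAbove).det - (N.submatrix Fin.castSucc c.succAbove).det))
        = (∑ c : Fin (d+2), (-1:ℚ)^(c:ℕ) * N a c * (N.submatrix Fin.succ c.succAbove).det)
          - ∑ c : Fin (d+2), (-1:ℚ)^(c:ℕ) * N a c * (N.submatrix Fin.castSucc c.succAbove).det := by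
          rw [← Finset.sum_sub_distrib]
          exact Finset.sum_congr rfl fun c _ => by ring
      _ = 0 := by rw [ht, hb, sub_zero]
  have hz0 : (N.submatrix Fin.succ (0:Fin (d+2)).succAbove).det
      - (N.submatrix Fin.castSucc (0:Fin (d+2)).succAbove).det = 0 := by
    rw [Fin.succAbove_zero, h1, h2, sub_self]
  have hker : (N.submatrix Fin.castSucc Fin.succ).mulVec
      (fun c : Fin (d+1) => (-1:ℚ)^((c.succ : Fin (d+2)):ℕ) *
        ((N.submatrix Fin.succ c.succ.succAbove).det
          - (N.submatrix Fin.castSucc c.succ.succAbove).det)) = 0 := by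
    ext a
    have h := hnull a.castSucc
    rw [Fin.sum_univ_succ, hz0, mul_zero, mul_zero, zero_add] at h
    simpa [Matrix.mulVec, dotProduct] using h
  have hunit : IsUnit (N.submatrix Fin.castSucc Fin.succ).det := by rw [h1]; exact isUnit_one
  have hv0 : (fun c : Fin (d+1) => (-1:ℚ)^((c.succ : Fin (d+2)):ℕ) *
      ((N.submatrix Fin.succ c.succ.succAbove).det
        - (N.submatrix Fin.castSucc c.succ.succAbove).det)) = 0 := by
    have h := congrArg ((N.submatrix Fin.castSucc Fin.succ)⁻¹.mulVec) hker
    rwa [Matrix.mulVec_mulVec, Matrix.nonsing_inv_mul _ hunit, Matrix.one_mulVec,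
      Matrix.mulVec_zero] at h
  rcases eq_or_ne b 0 with rfl | hb
  · rw [Fin.succAbove_zero, h1, h2]
  · obtain ⟨c, rfl⟩ : ∃ c : Fin (d+1), c.succ = b := ⟨b.pred hb, Fin.succ_pred b hb⟩
    have h := congrFun hv0 c
    simp only [Pi.zero_apply] at h
    rcases mul_eq_zero.mp h with h' | h'
    · exact absurd h' (pow_ne_zero _ (by norm_num))
    · exact sub_eq_zero.mp h'

/-- The Dodgson-type matrix from the theorem statement. -/
def MM (d : ℕ) (x : ℤ → ℤ → ℚ) (j k : ℤ) : Matrix (Fin (d+2)) (Fin (d+2)) ℚ :=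
  Matrix.of fun a b : Fin (d+2) =>
    x (j + (b : ℤ) - (a : ℤ)) (k - ((d : ℤ) + 1) + (a : ℤ) + (b : ℤ))

lemma MM_shift (d : ℕ) (x : ℤ → ℤ → ℚ) (j k : ℤ) (g : Fin (d+1) → Fin (d+2)) :
    (MM d x (j+1) (k-1)).submatrix Fin.succ g = (MM d x j k).submatrix Fin.castSucc g := by
  ext a b
  simp only [MM, Matrix.submatrix_apply, Matrix.of_apply]
  apply congr_arg₂ x <;> · simp only [Fin.val_succ, Fin.coe_castSucc]; push_cast; ring

lemma T_step (d : ℕ) (x : ℤ → ℤ → ℚ)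
    (hdet0 : ∀ j k : ℤ, (MM d x j k).det = 0)
    (hminor : ∀ j k : ℤ, ∀ f g : Fin (d+1) → Fin (d+2),
      (f = Fin.castSucc ∨ f = Fin.succ) → (g = Fin.castSucc ∨ g = Fin.succ) →
      ((MM d x j k).submatrix f g).det = 1)
    (j k : ℤ) (b : Fin (d+2)) :
    ((MM d x (j+1) (k-1)).submatrix Fin.succ b.succAbove).det
      = ((MM d x j k).submatrix Fin.succ b.succAbove).det := by
  rw [MM_shift]
  exact (minor_top_eq_bot (MM d x j k) (hdet0 j k)
    (hminor j k _ _ (Or.inl rfl) (Or.inr rfl))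
    (hminor j k _ _ (Or.inr rfl) (Or.inr rfl)) b).symm

lemma T_const (d : ℕ) (x : ℤ → ℤ → ℚ)
    (hdet0 : ∀ j k : ℤ, (MM d x j k).det = 0)
    (hminor : ∀ j k : ℤ, ∀ f g : Fin (d+1) → Fin (d+2),
      (f = Fin.castSucc ∨ f = Fin.succ) → (g = Fin.castSucc ∨ g = Fin.succ) →
      ((MM d x j k).submatrix f g).det = 1)
    (s : ℤ) (b : Fin (d+2)) :
    ∀ j : ℤ, ((MM d x j (s - j + 1)).submatrix Fin.succ b.succAbove).det
      = ((MM d x s 1).submatrix Fin.succ b.succAbove).det := by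
  have key : ∀ j : ℤ, ((MM d x j (s - j + 1)).submatrix Fin.succ b.succAbove).det
      = ((MM d x 0 (s + 1)).submatrix Fin.succ b.succAbove).det := by
    intro j
    induction j using Int.induction_on with
    | zero => norm_num
    | succ i ih =>
        have e : s - (i+1) + 1 = (s - i + 1) - 1 := by ring
        rw [e, T_step d x hdet0 hminor i (s - i + 1) b, ih]
    | pred i ih =>
        have h := T_step d x hdet0 hminor (-i-1) (s - (-i-1) + 1) b
        have e1 : (-i-1+1 : ℤ) = -i := by ring
        have e2 : s - (-i-1) + 1 - 1 = s - (-i) + 1 := by ring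
        rw [e1, e2] at h
        rw [← h, ih]
  intro j
  rw [key j, ← key s]
  norm_num

end ConservedAux

/-- If all Dodgson-type `(d+2)×(d+2)` matrices built from `x` are singular
while all their solid `(d+1)×(d+1)` submatrices of consecutive rows/columns
have determinant 1, then `x` satisfies a linear recursion along the diagonal
whose coefficients depend only on `j + k`. -/
theorem conserved_coefficients_linear_recursion
    (d : ℕ) (x : ℤ → ℤ → ℚ)
    (hdet0 : ∀ j k : ℤ,
      (Matrix.of fun a b : Fin (d+2) =>
        x (j + (b : ℤ) - (a : ℤ)) (k - ((d : ℤ) + 1) + (a : ℤ) + (b : ℤ))).det = 0)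
    (hminor : ∀ j k : ℤ, ∀ f g : Fin (d+1) → Fin (d+2),
      (f = Fin.castSucc ∨ f = Fin.succ) → (g = Fin.castSucc ∨ g = Fin.succ) →
      ((Matrix.of fun a b : Fin (d+2) =>
        x (j + (b : ℤ) - (a : ℤ)) (k - ((d : ℤ) + 1) + (a : ℤ) + (b : ℤ))).submatrix f g).det = 1) :
    ∃ c : ℤ → ℕ → ℚ, ∀ j k : ℤ,
      x j (k - d) +
        (∑ i ∈ Finset.range d, (-1 : ℚ)^(i+1) * c (j + k) (i+1) * x (j + i + 1) (k + i + 1 - d))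
        - (-1 : ℚ)^d * x (j + d + 1) (k + 1) = 0 := by
  have hdet0' : ∀ j k : ℤ, (ConservedAux.MM d x j k).det = 0 := hdet0
  have hminor' : ∀ j k : ℤ, ∀ f g : Fin (d+1) → Fin (d+2),
      (f = Fin.castSucc ∨ f = Fin.succ) → (g = Fin.castSucc ∨ g = Fin.succ) →
      ((ConservedAux.MM d x j k).submatrix f g).det = 1 := hminor
  refine ⟨fun s n => if h : n < d + 2 then
      ((ConservedAux.MM d x s 1).submatrix Fin.succ (Fin.succAbove ⟨n, h⟩)).det else 0, ?_⟩
  intro j k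
  set N := ConservedAux.MM d x j (k+1) with hN
  -- the Laplace expansion of the singular matrix N along row 0
  have h0 : (0:ℚ) = ∑ b : Fin (d+2),
      (-1:ℚ)^(b:ℕ) * N 0 b * (N.submatrix Fin.succ b.succAbove).det :=
    (hdet0' j (k+1)).symm.trans (Matrix.det_succ_row_zero N)
  rw [Fin.sum_univ_succ, Fin.sum_univ_castSucc] at h0
  -- first piece
  have hA0 : (-1:ℚ)^(((0:Fin (d+2)):ℕ)) * N 0 0
        * (N.submatrix Fin.succ (0:Fin (d+2)).succAbove).det
      = x j (k - (d:ℤ)) := by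
    have hT0 : (N.submatrix Fin.succ (0:Fin (d+2)).succAbove).det = 1 := by
      rw [Fin.succAbove_zero]
      exact hminor' j (k+1) _ _ (Or.inr rfl) (Or.inr rfl)
    have hN00 : N 0 0 = x j (k - (d:ℤ)) := by
      rw [hN]
      simp only [ConservedAux.MM, Matrix.of_apply]
      apply congr_arg₂ x <;> · simp only [Fin.val_zero]; push_cast; ring
    rw [hT0, hN00]
    simp
  -- last piece
  have hAlast : (-1:ℚ)^((((Fin.last d).succ : Fin (d+2)):ℕ)) * N 0 (Fin.last d).succ
        * (N.submatrix Fin.succ ((Fin.last d).succ).succAbove).det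
      = (-1:ℚ)^(d+1) * x (j + d + 1) (k + 1) := by
    have hlast : (Fin.last d).succ = Fin.last (d+1) := rfl
    have hTl : (N.submatrix Fin.succ ((Fin.last d).succ).succAbove).det = 1 := by
      rw [hlast, Fin.succAbove_last]
      exact hminor' j (k+1) _ _ (Or.inr rfl) (Or.inl rfl)
    have hNl : N 0 (Fin.last d).succ = x (j + d + 1) (k + 1) := by
      rw [hN]
      simp only [ConservedAux.MM, Matrix.of_apply]
      apply congr_arg₂ x <;>
        · simp only [Fin.val_succ, Fin.val_last, Fin.val_zero]; push_cast; ring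
    rw [hTl, hNl, mul_one, hlast, Fin.val_last]
  -- middle pieces
  have hmid : ∀ b : Fin d,
      (-1:ℚ)^(((b.castSucc.succ : Fin (d+2)):ℕ)) * N 0 b.castSucc.succ
          * (N.submatrix Fin.succ (b.castSucc.succ).succAbove).det
      = (-1:ℚ)^((b:ℕ)+1) *
          (if h : (b:ℕ)+1 < d + 2 then
            ((ConservedAux.MM d x (j+k) 1).submatrix Fin.succ
              (Fin.succAbove ⟨(b:ℕ)+1, h⟩)).det else 0)
          * x (j + (b:ℕ) + 1) (k + (b:ℕ) + 1 - d) := by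
    intro b
    have hb2 : (b:ℕ)+1 < d + 2 := by omega
    rw [dif_pos hb2]
    have hfin : (⟨(b:ℕ)+1, hb2⟩ : Fin (d+2)) = b.castSucc.succ := by
      ext; simp
    have hcoef : ((ConservedAux.MM d x (j+k) 1).submatrix Fin.succ
          (Fin.succAbove ⟨(b:ℕ)+1, hb2⟩)).det
        = (N.submatrix Fin.succ (b.castSucc.succ).succAbove).det := by
      rw [hfin, hN]
      have e : (k + 1 : ℤ) = (j + k) - j + 1 := by ring
      rw [e]
      exact (ConservedAux.T_const d x hdet0' hminor' (j+k) _ j).symm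
    have hval : ((b.castSucc.succ : Fin (d+2)):ℕ) = (b:ℕ)+1 := by simp
    have hNb : N 0 b.castSucc.succ = x (j + (b:ℕ) + 1) (k + (b:ℕ) + 1 - d) := by
      rw [hN]
      simp only [ConservedAux.MM, Matrix.of_apply]
      apply congr_arg₂ x <;>
        · simp only [Fin.val_succ, Fin.coe_castSucc, Fin.val_zero]; push_cast; ring
    rw [hcoef, hval, hNb]
    ring
  -- convert the goal's range-sum to a Fin-sum
  have hsum : ∑ i ∈ Finset.range d, (-1 : ℚ)^(i+1) *
        (if h : i+1 < d + 2 then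
          ((ConservedAux.MM d x (j+k) 1).submatrix Fin.succ
            (Fin.succAbove ⟨i+1, h⟩)).det else 0) * x (j + i + 1) (k + i + 1 - d)
      = ∑ b : Fin d, (-1:ℚ)^(((b.castSucc.succ : Fin (d+2)):ℕ)) * N 0 b.castSucc.succ
          * (N.submatrix Fin.succ (b.castSucc.succ).succAbove).det := by
    rw [← Fin.sum_univ_eq_sum_range (fun i => (-1 : ℚ)^(i+1) *
        (if h : i+1 < d + 2 then
          ((ConservedAux.MM d x (j+k) 1).submatrix Fin.succ
            (Fin.succAbove ⟨i+1, h⟩)).det else 0) * x (j + i + 1) (k + i + 1 - d)) d]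
    exact Finset.sum_congr rfl fun b _ => (hmid b).symm
  rw [hA0, hAlast] at h0
  rw [hsum]
  have hpow : (-1:ℚ)^(d+1) = -(-1:ℚ)^d := by rw [pow_succ]; ring
  rw [hpow] at h0
  linarith [h0]
end

section
/- Suppose p, q : ℤ/n → ℚ evolve under the map p*_i = q_i·((1+p_{i−r})(1+p_{i+r'}))/((1+p_{i−r−1}⁻¹)(1+p_{i+r'+1}⁻¹)), q*_i = p_{i+r'−r}⁻¹, where r + r' + 2 = κ. Then Π_{i∈ℤ/n} (1+p_{i−r})(1+p_{i+r'}) / ((1+p_{i−r−1}⁻¹)(1+p_{i+r'+1}⁻¹)) = Π_{i∈ℤ/n} p_i², and hence Π_{i=1}^n p*_i = (Π_{i=1}^n q_i)·(Π_{i=1}^n p_i)². -/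
/-- Under the higher pentagram evolution
`p*_i = q_i (1+p_{i-r})(1+p_{i+r'}) / ((1+p_{i-r-1}⁻¹)(1+p_{i+r'+1}⁻¹))` on
`ℤ/n`, the product of the correction factors telescopes to `(∏ p_i)²`, and
hence `∏ p*_i = (∏ q_i) · (∏ p_i)²`. -/
theorem pentagram_product_telescoping
    (n : ℕ) [NeZero n] (r r' : ℕ) (p q : ZMod n → ℚ)
    (hp0 : ∀ i, p i ≠ 0) (hp1 : ∀ i, p i ≠ -1) (hpinv : ∀ i, (p i)⁻¹ ≠ -1)
    (pstar : ZMod n → ℚ)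
    (hps : ∀ i : ZMod n, pstar i =
      q i * ((1 + p (i - (r : ZMod n))) * (1 + p (i + (r' : ZMod n)))) /
        ((1 + (p (i - (r : ZMod n) - 1))⁻¹) * (1 + (p (i + (r' : ZMod n) + 1))⁻¹))) :
    (∏ i : ZMod n,
        ((1 + p (i - (r : ZMod n))) * (1 + p (i + (r' : ZMod n)))) /
          ((1 + (p (i - (r : ZMod n) - 1))⁻¹) * (1 + (p (i + (r' : ZMod n) + 1))⁻¹))
        = ∏ i : ZMod n, (p i)^2) ∧
    (∏ i : ZMod n, pstar i = (∏ i : ZMod n, q i) * (∏ i : ZMod n, p i)^2) := by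
  have shift : ∀ (f : ZMod n → ℚ) (c : ZMod n), ∏ i : ZMod n, f (i + c) = ∏ i : ZMod n, f i := by
    intro f c
    exact Fintype.prod_equiv (Equiv.addRight c) _ _ (fun i => rfl)
  have shift' : ∀ (f : ZMod n → ℚ) (c : ZMod n), ∏ i : ZMod n, f (i - c) = ∏ i : ZMod n, f i := by
    intro f c
    simpa [sub_eq_add_neg] using shift f (-c)
  have key : ∀ j : ZMod n, (1 + p j) / (1 + (p j)⁻¹) = p j := by
    intro j
    have h1 : (1 : ℚ) + p j ≠ 0 := by
      intro h; apply hp1 j; linarith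
    have h2 : (1 : ℚ) + (p j)⁻¹ ≠ 0 := by
      intro h; apply hpinv j; linarith
    rw [div_eq_iff h2, mul_add, mul_inv_cancel₀ (hp0 j), mul_one, add_comm]
  have main : (∏ i : ZMod n,
        ((1 + p (i - (r : ZMod n))) * (1 + p (i + (r' : ZMod n)))) /
          ((1 + (p (i - (r : ZMod n) - 1))⁻¹) * (1 + (p (i + (r' : ZMod n) + 1))⁻¹)))
        = ∏ i : ZMod n, (p i)^2 := by
    rw [Finset.prod_div_distrib, Finset.prod_mul_distrib, Finset.prod_mul_distrib]
    rw [shift' (fun j => 1 + p j) (r : ZMod n), shift (fun j => 1 + p j) (r' : ZMod n)]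
    rw [show (∏ i : ZMod n, (1 + (p (i - (r : ZMod n) - 1))⁻¹))
        = ∏ i : ZMod n, (1 + (p i)⁻¹) from by
      simpa [sub_sub] using shift' (fun j => 1 + (p j)⁻¹) ((r : ZMod n) + 1)]
    rw [show (∏ i : ZMod n, (1 + (p (i + (r' : ZMod n) + 1))⁻¹))
        = ∏ i : ZMod n, (1 + (p i)⁻¹) from by
      simpa [add_assoc] using shift (fun j => 1 + (p j)⁻¹) ((r' : ZMod n) + 1)]
    have : ((∏ i : ZMod n, (1 + p i)) / ∏ i : ZMod n, (1 + (p i)⁻¹)) = ∏ i : ZMod n, p i := by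
      rw [← Finset.prod_div_distrib]
      exact Finset.prod_congr rfl (fun j _ => key j)
    calc (∏ i : ZMod n, (1 + p i)) * (∏ i : ZMod n, (1 + p i)) /
          ((∏ i : ZMod n, (1 + (p i)⁻¹)) * ∏ i : ZMod n, (1 + (p i)⁻¹))
        = ((∏ i : ZMod n, (1 + p i)) / ∏ i : ZMod n, (1 + (p i)⁻¹)) *
          ((∏ i : ZMod n, (1 + p i)) / ∏ i : ZMod n, (1 + (p i)⁻¹)) := by
          rw [div_mul_div_comm]
      _ = (∏ i : ZMod n, p i) * (∏ i : ZMod n, p i) := by rw [this]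
      _ = ∏ i : ZMod n, (p i)^2 := by rw [← Finset.prod_mul_distrib]; exact Finset.prod_congr rfl (fun j _ => (sq (p j)).symm)
  refine ⟨main, ?_⟩
  have : ∏ i : ZMod n, pstar i = (∏ i : ZMod n, q i) *
      ∏ i : ZMod n, ((1 + p (i - (r : ZMod n))) * (1 + p (i + (r' : ZMod n)))) /
          ((1 + (p (i - (r : ZMod n) - 1))⁻¹) * (1 + (p (i + (r' : ZMod n) + 1))⁻¹)) := by
    rw [← Finset.prod_mul_distrib]
    exact Finset.prod_congr rfl (fun i _ => by rw [hps i]; ring)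
  rw [this, main, ← Finset.prod_pow]
end

section
/- Quasi-periodicity propagation: let T : ℤ³ → ℚ (nonvanishing) satisfy the octahedron relation, and suppose the initial data T(i,j,k) on the two layers k determined by k ≡ i+j+1 (mod 2), k ∈ {0,1}, satisfies T(i+κ, j+2−κ, k) = T(i,j,k) for all i,j. Then T(i+κ, j+2−κ, k) = T(i,j,k) for ALL k ∈ ℤ (with i+j+k odd). -/
/-- Translation-invariance of initial data on the layers `k ∈ {0,1}`,
`k ≡ i+j+1 (mod 2)`, under `(i,j) ↦ (i+κ, j+2-κ)` propagates to all of the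
odd sublattice `i+j+k ≡ 1 (mod 2)` under the octahedron relation. -/
theorem quasi_periodicity_propagation
    (κ : ℤ) (hκ : 3 ≤ κ) (T : ℤ → ℤ → ℤ → ℚ)
    (hnz : ∀ i j k : ℤ, (i + j + k) % 2 = 1 → T i j k ≠ 0)
    (hoct : ∀ i j k : ℤ, (i + j + k) % 2 = 0 →
      T i j (k+1) * T i j (k-1) =
        T i (j+1) k * T i (j-1) k + T (i+1) j k * T (i-1) j k)
    (hinit : ∀ i j : ℤ,
      T (i + κ) (j + 2 - κ) ((i + j + 1) % 2) = T i j ((i + j + 1) % 2)) :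
    ∀ i j k : ℤ, (i + j + k) % 2 = 1 → T (i + κ) (j + 2 - κ) k = T i j k := by
  set Q : ℤ → Prop :=
    fun m => ∀ i j : ℤ, (i + j + m) % 2 = 1 → T (i + κ) (j + 2 - κ) m = T i j m with hQ
  have Q0 : Q 0 := by
    intro i j h
    have h1 : (i + j + 1) % 2 = 0 := by omega
    have := hinit i j
    rwa [h1] at this
  have Q1 : Q 1 := by
    intro i j h
    have h1 : (i + j + 1) % 2 = 1 := by omega
    have := hinit i j
    rwa [h1] at this
  have step_up : ∀ m : ℤ, Q (m - 1) → Q m → Q (m + 1) := by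
    intro m hm1 hm i j h
    have hpar : (i + j + m) % 2 = 0 := by omega
    have e1 := hoct i j m hpar
    have e2 := hoct (i + κ) (j + 2 - κ) m (by omega)
    have hj1 : T (i + κ) (j + 2 - κ + 1) m = T i (j + 1) m := by
      have h' := hm i (j + 1) (by omega)
      rwa [show j + 1 + 2 - κ = j + 2 - κ + 1 from by ring] at h'
    have hj2 : T (i + κ) (j + 2 - κ - 1) m = T i (j - 1) m := by
      have h' := hm i (j - 1) (by omega)
      rwa [show j - 1 + 2 - κ = j + 2 - κ - 1 from by ring] at h'
    have hi1 : T (i + κ + 1) (j + 2 - κ) m = T (i + 1) j m := by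
      have h' := hm (i + 1) j (by omega)
      rwa [show i + 1 + κ = i + κ + 1 from by ring] at h'
    have hi2 : T (i + κ - 1) (j + 2 - κ) m = T (i - 1) j m := by
      have h' := hm (i - 1) j (by omega)
      rwa [show i - 1 + κ = i + κ - 1 from by ring] at h'
    have hk1 : T (i + κ) (j + 2 - κ) (m - 1) = T i j (m - 1) := hm1 i j (by omega)
    rw [hj1, hj2, hi1, hi2, hk1] at e2
    exact mul_right_cancel₀ (hnz i j (m - 1) (by omega)) (e2.trans e1.symm)
  have step_down : ∀ m : ℤ, Q m → Q (m + 1) → Q (m - 1) := by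
    intro m hm hm1 i j h
    have hpar : (i + j + m) % 2 = 0 := by omega
    have e1 := hoct i j m hpar
    have e2 := hoct (i + κ) (j + 2 - κ) m (by omega)
    have hj1 : T (i + κ) (j + 2 - κ + 1) m = T i (j + 1) m := by
      have h' := hm i (j + 1) (by omega)
      rwa [show j + 1 + 2 - κ = j + 2 - κ + 1 from by ring] at h'
    have hj2 : T (i + κ) (j + 2 - κ - 1) m = T i (j - 1) m := by
      have h' := hm i (j - 1) (by omega)
      rwa [show j - 1 + 2 - κ = j + 2 - κ - 1 from by ring] at h'
    have hi1 : T (i + κ + 1) (j + 2 - κ) m = T (i + 1) j m := by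
      have h' := hm (i + 1) j (by omega)
      rwa [show i + 1 + κ = i + κ + 1 from by ring] at h'
    have hi2 : T (i + κ - 1) (j + 2 - κ) m = T (i - 1) j m := by
      have h' := hm (i - 1) j (by omega)
      rwa [show i - 1 + κ = i + κ - 1 from by ring] at h'
    have hk1 : T (i + κ) (j + 2 - κ) (m + 1) = T i j (m + 1) := hm1 i j (by omega)
    rw [hj1, hj2, hi1, hi2, hk1] at e2
    exact mul_left_cancel₀ (hnz i j (m + 1) (by omega)) (e2.trans e1.symm)
  have Hup : ∀ n : ℕ, Q n ∧ Q (n + 1) := by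
    intro n
    induction n with
    | zero => exact ⟨Q0, Q1⟩
    | succ n ih =>
      refine ⟨by push_cast; exact ih.2, ?_⟩
      push_cast
      exact step_up (n + 1) (by simpa using ih.1) ih.2
  have Hdown : ∀ n : ℕ, Q (-n) ∧ Q (-n + 1) := by
    intro n
    induction n with
    | zero => simpa using ⟨Q0, Q1⟩
    | succ n ih =>
      refine ⟨?_, by push_cast; ring_nf; simpa using ih.1⟩
      have := step_down (-n) ih.1 ih.2
      have e : (-(↑(n+1):ℤ)) = (-n : ℤ) - 1 := by push_cast; ring
      rwa [e]
  intro i j k h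
  obtain ⟨n, hn⟩ : ∃ n : ℕ, k = n ∨ k = -n := ⟨k.natAbs, by omega⟩
  rcases hn with hn | hn
  · subst hn; exact (Hup n).1 i j h
  · subst hn; exact (Hdown n).1 i j h
end

section
/- Conservation of the product of Y-variables: let T : ℤ³ → ℚ be nonvanishing and satisfy the octahedron relation with the quasi-periodicity T(i+n, j−n, k) = T(i,j,k)·λ^{(κ−2)i+κj} (k even) and ·μ^{(κ−2)i+κj} (k odd). Then Π_{i=0}^{n−1} Y(i, −i, 0) = λ^{2κ−2}, where Y(i,j,k) = (T(i+1,j,k)·T(i−1,j,k))/(T(i,j+1,k)·T(i,j−1,k)). -/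
/-- Under quasi-periodicity of `T`, the product of the `Y`-variables along the
diagonal at level `k = 0` equals `λ^{2κ-2}`. -/
theorem product_of_Y_is_conserved
    (n : ℕ) (hn : 1 ≤ n) (κ : ℤ) (hκ : 3 ≤ κ)
    (lam mu : ℚ) (hlam : lam ≠ 0) (hmu : mu ≠ 0)
    (T : ℤ → ℤ → ℤ → ℚ)
    (hnz : ∀ i j k : ℤ, T i j k ≠ 0)
    (hoct : ∀ i j k : ℤ,
      T i j (k+1) * T i j (k-1) =
        T i (j+1) k * T i (j-1) k + T (i+1) j k * T (i-1) j k)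
    (hqp : ∀ i j k : ℤ,
      (k % 2 = 0 → T (i + n) (j - n) k = T i j k * lam ^ ((κ - 2) * i + κ * j)) ∧
      (k % 2 = 1 → T (i + n) (j - n) k = T i j k * mu ^ ((κ - 2) * i + κ * j))) :
    ∏ i ∈ Finset.range n,
        (T ((i : ℤ) + 1) (-(i : ℤ)) 0 * T ((i : ℤ) - 1) (-(i : ℤ)) 0) /
          (T (i : ℤ) (-(i : ℤ) + 1) 0 * T (i : ℤ) (-(i : ℤ) - 1) 0)
      = lam ^ (2 * κ - 2) := by
  have key : ∀ m : ℕ,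
      ∏ i ∈ Finset.range m,
        (T ((i : ℤ) + 1) (-(i : ℤ)) 0 * T ((i : ℤ) - 1) (-(i : ℤ)) 0) /
          (T (i : ℤ) (-(i : ℤ) + 1) 0 * T (i : ℤ) (-(i : ℤ) - 1) 0)
      = (T (m : ℤ) (-(m : ℤ) + 1) 0 * T (-1) 0 0) /
          (T ((m : ℤ) - 1) (-(m : ℤ)) 0 * T 0 1 0) := by
    intro m
    induction m with
    | zero =>
      simp [div_self, mul_comm, hnz]
    | succ m ih =>
      rw [Finset.prod_range_succ, ih]
      push_cast
      have h1 := hnz ((m : ℤ) + 1) (-(m : ℤ)) 0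
      have h2 := hnz (m : ℤ) (-(m : ℤ) + 1) 0
      have h3 := hnz (m : ℤ) (-(m : ℤ) - 1) 0
      have h4 := hnz ((m : ℤ) - 1) (-(m : ℤ)) 0
      have h5 := hnz 0 1 0
      have e1 : -((m : ℤ) + 1) + 1 = -(m : ℤ) := by ring
      have e2 : ((m : ℤ) + 1) - 1 = (m : ℤ) := by ring
      have e3 : -((m : ℤ) + 1) = -(m : ℤ) - 1 := by ring
      rw [e1, e2, e3]
      field_simp
  rw [key n]
  have hA := (hqp 0 1 0).1 rfl
  have hB := (hqp (-1) 0 0).1 rfl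
  have eA : (0 : ℤ) + (n : ℤ) = (n : ℤ) := by ring
  have eB : (1 : ℤ) - (n : ℤ) = -(n : ℤ) + 1 := by ring
  have eC : (-1 : ℤ) + (n : ℤ) = (n : ℤ) - 1 := by ring
  have eD : (0 : ℤ) - (n : ℤ) = -(n : ℤ) := by ring
  rw [eA, eB] at hA
  rw [eC, eD] at hB
  rw [hA, hB]
  have h5 := hnz 0 1 0
  have h6 := hnz (-1) 0 0
  have hpow : ((κ - 2) * 0 + κ * 1 : ℤ) = κ := by ring
  have hpow2 : ((κ - 2) * (-1) + κ * 0 : ℤ) = 2 - κ := by ring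
  rw [hpow, hpow2]
  have h7 : lam ^ (2 - κ) ≠ 0 := zpow_ne_zero _ hlam
  field_simp
  rw [← zpow_add₀ hlam]; congr 1
  ring
end

section
/- For d = 1: let x : ℤ² → ℚ be nonvanishing and satisfy x(j,k+1)·x(j,k−1) = x(j+1,k)·x(j−1,k) + 1 for all j,k, with the two wall conditions x(0,k) = 1 and x(ℓ+1,k) = 1 for all k (ℓ ≥ 1 fixed). Then x is periodic in k with period 2(ℓ+3): x(j, k + 2(ℓ+3)) = x(j,k) for all 1 ≤ j ≤ ℓ and all k. -/
namespace A1ZamAux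

/-- `x` extended by zero rows outside `[0, l+1]`. -/
def XX (l : ℕ) (x : ℤ → ℤ → ℚ) (j k : ℤ) : ℚ :=
  if 0 ≤ j ∧ j ≤ (l : ℤ) + 1 then x j k else 0

lemma XX_in (l : ℕ) (x : ℤ → ℤ → ℚ) {j : ℤ} (h1 : 0 ≤ j) (h2 : j ≤ (l : ℤ) + 1) (k : ℤ) :
    XX l x j k = x j k := if_pos ⟨h1, h2⟩

lemma XX_out (l : ℕ) (x : ℤ → ℤ → ℚ) {j : ℤ} (h : ¬ (0 ≤ j ∧ j ≤ (l : ℤ) + 1)) (k : ℤ) :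
    XX l x j k = 0 := if_neg h

/-- The mirrored solution `j ↦ l+1-j`. -/
def mir (l : ℕ) (x : ℤ → ℤ → ℚ) : ℤ → ℤ → ℚ := fun j k => x ((l : ℤ) + 1 - j) k

lemma mir_hnz (l : ℕ) (x : ℤ → ℤ → ℚ) (hnz : ∀ j k : ℤ, x j k ≠ 0) :
    ∀ j k : ℤ, mir l x j k ≠ 0 := fun _ _ => hnz _ _

lemma mir_hrel (l : ℕ) (x : ℤ → ℤ → ℚ)
    (hrel : ∀ j k : ℤ, 1 ≤ j → j ≤ (l : ℤ) →
      x j (k+1) * x j (k-1) = x (j+1) k * x (j-1) k + 1) :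
    ∀ j k : ℤ, 1 ≤ j → j ≤ (l : ℤ) →
      mir l x j (k+1) * mir l x j (k-1) = mir l x (j+1) k * mir l x (j-1) k + 1 := by
  intro j k h1 h2
  have h := hrel ((l:ℤ) + 1 - j) k (by omega) (by omega)
  show x ((l:ℤ)+1-j) (k+1) * x ((l:ℤ)+1-j) (k-1)
      = x ((l:ℤ)+1-(j+1)) k * x ((l:ℤ)+1-(j-1)) k + 1
  rw [show (l:ℤ)+1-(j+1) = (l:ℤ)+1-j-1 by ring,
      show (l:ℤ)+1-(j-1) = (l:ℤ)+1-j+1 by ring]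
  linear_combination h

lemma mir_h0 (l : ℕ) (x : ℤ → ℤ → ℚ) (hl1 : ∀ k : ℤ, x ((l : ℤ) + 1) k = 1) :
    ∀ k : ℤ, mir l x 0 k = 1 := by
  intro k
  show x ((l:ℤ)+1-0) k = 1
  rw [show (l:ℤ)+1-0 = (l:ℤ)+1 by ring]
  exact hl1 k

lemma mir_hl1 (l : ℕ) (x : ℤ → ℤ → ℚ) (h0 : ∀ k : ℤ, x 0 k = 1) :
    ∀ k : ℤ, mir l x ((l : ℤ) + 1) k = 1 := by
  intro k
  show x ((l:ℤ)+1-((l:ℤ)+1)) k = 1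
  rw [show (l:ℤ)+1-((l:ℤ)+1) = 0 by ring]
  exact h0 k

/-- The T-system relation extends to the zero rows. -/
lemma relX (l : ℕ) (x : ℤ → ℤ → ℚ)
    (hrel : ∀ j k : ℤ, 1 ≤ j → j ≤ (l : ℤ) →
      x j (k+1) * x j (k-1) = x (j+1) k * x (j-1) k + 1)
    (h0 : ∀ k : ℤ, x 0 k = 1)
    (hl1 : ∀ k : ℤ, x ((l : ℤ) + 1) k = 1) :
    ∀ j k : ℤ, 0 ≤ j → j ≤ (l : ℤ) + 1 →
      XX l x j (k+1) * XX l x j (k-1) = XX l x (j+1) k * XX l x (j-1) k + 1 := by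
  intro j k h1 h2
  have e1 : XX l x j (k+1) = x j (k+1) := XX_in l x h1 h2 _
  have e2 : XX l x j (k-1) = x j (k-1) := XX_in l x h1 h2 _
  by_cases hj0 : j = 0
  · subst hj0
    have e3 : XX l x (0+1) k = x 1 k := XX_in l x (by omega) (by omega) _
    have e4 : XX l x (0-1) k = 0 := XX_out l x (by omega) _
    rw [e1, e2, e3, e4, h0, h0]
    ring
  · by_cases hjt : j = (l:ℤ) + 1
    · subst hjt
      have e3 : XX l x ((l:ℤ)+1+1) k = 0 := XX_out l x (by omega) _
      have e4 : XX l x ((l:ℤ)+1-1) k = x ((l:ℤ)+1-1) k := XX_in l x (by omega) (by omega) _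
      rw [e1, e2, e3, e4, hl1, hl1]
      ring
    · have e3 : XX l x (j+1) k = x (j+1) k := XX_in l x (by omega) (by omega) _
      have e4 : XX l x (j-1) k = x (j-1) k := XX_in l x (by omega) (by omega) _
      rw [e1, e2, e3, e4]
      exact hrel j k (by omega) (by omega)

/-- Key linear recurrence along diagonals (frieze/continuant structure). -/
lemma lemA (l : ℕ) (x : ℤ → ℤ → ℚ)
    (hnz : ∀ j k : ℤ, x j k ≠ 0)
    (hrel : ∀ j k : ℤ, 1 ≤ j → j ≤ (l : ℤ) →
      x j (k+1) * x j (k-1) = x (j+1) k * x (j-1) k + 1)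
    (h0 : ∀ k : ℤ, x 0 k = 1)
    (hl1 : ∀ k : ℤ, x ((l : ℤ) + 1) k = 1) :
    ∀ j : ℤ, 0 ≤ j → j ≤ (l : ℤ) → ∀ k : ℤ,
      XX l x (j+1) k = x 1 (k - j) * XX l x j (k+1) - XX l x (j-1) (k+2) := by
  have hR := relX l x hrel h0 hl1
  refine Int.le_induction ?_ ?_
  · intro _ k
    have e1 : XX l x (0+1) k = x 1 k := XX_in l x (by omega) (by omega) _
    have e2 : XX l x 0 (k+1) = x 0 (k+1) := XX_in l x (by omega) (by omega) _
    have e3 : XX l x (0-1) (k+2) = 0 := XX_out l x (by omega) _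
    rw [e1, e2, e3, h0, show k - 0 = k by ring]
    ring
  · intro j hj ih hjl k
    have ihk := ih (by omega) (k - 1)
    rw [show k - 1 + 1 = k by ring, show k - 1 + 2 = k + 1 by ring] at ihk
    have R1 := hR (j+1) k (by omega) (by omega)
    rw [show j + 1 + 1 = j + 2 by ring, show j + 1 - 1 = j by ring] at R1
    have R2 := hR j (k+1) (by omega) (by omega)
    rw [show k + 1 + 1 = k + 2 by ring, show k + 1 - 1 = k by ring] at R2
    have hne : XX l x j k ≠ 0 := by
      rw [XX_in l x (by omega) (by omega)]
      exact hnz j k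
    rw [show j + 1 + 1 = j + 2 by ring, show j + 1 - 1 = j by ring,
        show k - (j+1) = k - 1 - j by ring]
    have key : XX l x j k *
        (XX l x (j+2) k - (x 1 (k - 1 - j) * XX l x (j+1) (k+1) - XX l x j (k+2))) = 0 := by
      linear_combination (-1) * R1 + R2 + XX l x (j+1) (k+1) * ihk
    have h2 := (mul_eq_zero.mp key).resolve_left hne
    linarith [h2]

/-- Glide symmetry: row 1 equals row l shifted by l+3. -/
lemma glide (l : ℕ) (x : ℤ → ℤ → ℚ) (hl : 1 ≤ l)
    (hnz : ∀ j k : ℤ, x j k ≠ 0)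
    (hrel : ∀ j k : ℤ, 1 ≤ j → j ≤ (l : ℤ) →
      x j (k+1) * x j (k-1) = x (j+1) k * x (j-1) k + 1)
    (h0 : ∀ k : ℤ, x 0 k = 1)
    (hl1 : ∀ k : ℤ, x ((l : ℤ) + 1) k = 1) :
    ∀ t : ℤ, x 1 t = x (l : ℤ) (t - ((l : ℤ) + 3)) := by
  intro t
  have hLpos : (1:ℤ) ≤ (l:ℤ) := by exact_mod_cast hl
  -- apply lemA to the mirror at j = l
  have hA := lemA l (mir l x) (mir_hnz l x hnz) (mir_hrel l x hrel)
      (mir_h0 l x hl1) (mir_hl1 l x h0) (l:ℤ) (by omega) le_rfl (t - 3)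
  have m1 : XX l (mir l x) ((l:ℤ)+1) (t-3) = mir l x ((l:ℤ)+1) (t-3) :=
    XX_in l _ (by omega) (by omega) _
  have m2 : XX l (mir l x) (l:ℤ) (t-3+1) = mir l x (l:ℤ) (t-3+1) :=
    XX_in l _ (by omega) (by omega) _
  have m3 : XX l (mir l x) ((l:ℤ)-1) (t-3+2) = mir l x ((l:ℤ)-1) (t-3+2) :=
    XX_in l _ (by omega) (by omega) _
  rw [m1, m2, m3] at hA
  simp only [mir] at hA
  rw [show (l:ℤ)+1-((l:ℤ)+1) = 0 by ring, show (l:ℤ)+1-1 = (l:ℤ) by ring,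
      show (l:ℤ)+1-(l:ℤ) = 1 by ring, show (l:ℤ)+1-((l:ℤ)-1) = 2 by ring,
      h0, show t-3+1 = t-2 by ring, show t-3+2 = t-1 by ring,
      show t-3-(l:ℤ) = t-3-(l:ℤ) by ring] at hA
  -- hA : 1 = x l (t-3-l) * x 1 (t-2) - x 2 (t-1)
  have hB := lemA l x hnz hrel h0 hl1 1 (by omega) hLpos (t-1)
  have n1 : XX l x (1+1) (t-1) = x 2 (t-1) := by
    rw [show (1:ℤ)+1 = 2 by ring]
    exact XX_in l x (by omega) (by omega) _
  have n2 : XX l x 1 (t-1+1) = x 1 (t-1+1) := XX_in l x (by omega) (by omega) _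
  have n3 : XX l x (1-1) (t-1+2) = x 0 (t-1+2) := by
    rw [show (1:ℤ)-1 = 0 by ring]
    exact XX_in l x (by omega) (by omega) _
  rw [n1, n2, n3, h0, show t-1+1 = t by ring, show t-1-1 = t-2 by ring] at hB
  -- hB : x 2 (t-1) = x 1 (t-2) * x 1 t - 1
  have key : x 1 (t-2) * (x (l:ℤ) (t-3-(l:ℤ)) - x 1 t) = 0 := by
    linear_combination (-1) * hA + hB
  have h2 := (mul_eq_zero.mp key).resolve_left (hnz 1 (t-2))
  rw [show t - ((l:ℤ)+3) = t-3-(l:ℤ) by ring]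
  linarith [h2]

/-- Row 1 is periodic with period 2(l+3). -/
lemma row1_periodic (l : ℕ) (x : ℤ → ℤ → ℚ) (hl : 1 ≤ l)
    (hnz : ∀ j k : ℤ, x j k ≠ 0)
    (hrel : ∀ j k : ℤ, 1 ≤ j → j ≤ (l : ℤ) →
      x j (k+1) * x j (k-1) = x (j+1) k * x (j-1) k + 1)
    (h0 : ∀ k : ℤ, x 0 k = 1)
    (hl1 : ∀ k : ℤ, x ((l : ℤ) + 1) k = 1) :
    ∀ t : ℤ, x 1 (t + 2*((l:ℤ)+3)) = x 1 t := by
  intro t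
  have g1 := glide l x hl hnz hrel h0 hl1
  have g2 := glide l (mir l x) hl (mir_hnz l x hnz) (mir_hrel l x hrel)
      (mir_h0 l x hl1) (mir_hl1 l x h0)
  have g2' : ∀ s : ℤ, x (l:ℤ) s = x 1 (s - ((l:ℤ)+3)) := by
    intro s
    have h := g2 s
    simp only [mir] at h
    rw [show (l:ℤ)+1-1 = (l:ℤ) by ring, show (l:ℤ)+1-(l:ℤ) = 1 by ring] at h
    exact h
  rw [g1 (t + 2*((l:ℤ)+3)), show t + 2*((l:ℤ)+3) - ((l:ℤ)+3) = t + ((l:ℤ)+3) by ring,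
      g2' (t + ((l:ℤ)+3)), show t + ((l:ℤ)+3) - ((l:ℤ)+3) = t by ring]

/-- All rows are periodic with period 2(l+3). -/
lemma perRow (l : ℕ) (x : ℤ → ℤ → ℚ) (hl : 1 ≤ l)
    (hnz : ∀ j k : ℤ, x j k ≠ 0)
    (hrel : ∀ j k : ℤ, 1 ≤ j → j ≤ (l : ℤ) →
      x j (k+1) * x j (k-1) = x (j+1) k * x (j-1) k + 1)
    (h0 : ∀ k : ℤ, x 0 k = 1)
    (hl1 : ∀ k : ℤ, x ((l : ℤ) + 1) k = 1) :
    ∀ j : ℤ, 0 ≤ j →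
      (∀ k : ℤ, XX l x j (k + 2*((l:ℤ)+3)) = XX l x j k) ∧
      (∀ k : ℤ, XX l x (j-1) (k + 2*((l:ℤ)+3)) = XX l x (j-1) k) := by
  have hq := row1_periodic l x hl hnz hrel h0 hl1
  refine Int.le_induction ?_ ?_
  · constructor
    · intro k
      rw [XX_in l x le_rfl (by omega), XX_in l x le_rfl (by omega), h0, h0]
    · intro k
      rw [XX_out l x (by omega), XX_out l x (by omega)]
  · intro j hj ih
    constructor
    · intro k
      by_cases hc : j ≤ (l:ℤ)
      · have hA := lemA l x hnz hrel h0 hl1 j (by omega) hc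
        rw [hA (k + 2*((l:ℤ)+3)), hA k,
            show k + 2*((l:ℤ)+3) - j = (k - j) + 2*((l:ℤ)+3) by ring,
            show k + 2*((l:ℤ)+3) + 1 = (k+1) + 2*((l:ℤ)+3) by ring,
            show k + 2*((l:ℤ)+3) + 2 = (k+2) + 2*((l:ℤ)+3) by ring,
            hq, ih.1, ih.2]
      · rw [XX_out l x (by omega), XX_out l x (by omega)]
    · intro k
      rw [show j + 1 - 1 = j by ring]
      exact ih.1 k

end A1ZamAux

/-- Zamolodchikov periodicity for the `A₁` T-system on a strip of width `ℓ`: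
with walls `x 0 k = x (ℓ+1) k = 1`, the solution has period `2(ℓ+3)` in `k`. -/
theorem A1_zamolodchikov_periodicity
    (l : ℕ) (hl : 1 ≤ l) (x : ℤ → ℤ → ℚ)
    (hnz : ∀ j k : ℤ, x j k ≠ 0)
    (hrel : ∀ j k : ℤ, 1 ≤ j → j ≤ (l : ℤ) →
      x j (k+1) * x j (k-1) = x (j+1) k * x (j-1) k + 1)
    (h0 : ∀ k : ℤ, x 0 k = 1)
    (hl1 : ∀ k : ℤ, x ((l : ℤ) + 1) k = 1) :
    ∀ j k : ℤ, 1 ≤ j → j ≤ (l : ℤ) → x j (k + 2 * ((l : ℤ) + 3)) = x j k := by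
  intro j k hj1 hjl
  have hp := (A1ZamAux.perRow l x hl hnz hrel h0 hl1 j (by omega)).1 k
  rwa [A1ZamAux.XX_in l x (by omega) (by omega), A1ZamAux.XX_in l x (by omega) (by omega)] at hp
end

section
/- The Lindström–Gessel–Viennot principle in the form used for network solutions: if N is a finite acyclic directed graph with edge weights in ℚ≥0, and sources s₁,…,s_k and sinks t₁,…,t_k are such that every system of paths connecting {s_i} to {t_i} bijectively with no two paths sharing a vertex necessarily connects s_i to t_i (identity permutation), then det of the k×k path-weight matrix (whose (i,j) entry is the sum over paths from s_i to t_j of the product of edge weights) equals the sum over vertex-disjoint path systems of the products of their weights; in particular this determinant is a nonnegative element of ℚ. -/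
/-- Weight of a path (a list of vertices): product of edge weights over
consecutive pairs. -/
def pathWeight {V : Type*} (w : V → V → ℚ) (l : List V) : ℚ :=
  ((l.zip l.tail).map fun p => w p.1 p.2).prod

namespace LGV
variable {V : Type*} [DecidableEq V]
set_option linter.unusedSectionVars false

lemma pathWeight_cons_cons (w : V → V → ℚ) (x y : V) (l : List V) :
    pathWeight w (x :: y :: l) = w x y * pathWeight w (y :: l) := by
  simp [pathWeight]

lemma pathWeight_singleton (w : V → V → ℚ) (v : V) : pathWeight w [v] = 1 := by
  simp [pathWeight]

lemma pathWeight_split (w : V → V → ℚ) (a : List V) (v : V) (b : List V) :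
    pathWeight w (a ++ v :: b) = pathWeight w (a ++ [v]) * pathWeight w (v :: b) := by
  induction a with
  | nil => simp [pathWeight_singleton]
  | cons x xs ih =>
    cases xs with
    | nil => simp [pathWeight_cons_cons, pathWeight_singleton]
    | cons y ys =>
      simp only [List.cons_append, pathWeight_cons_cons]
      rw [← List.cons_append, ← List.cons_append, ih]
      ring

lemma pathWeight_nonneg (w : V → V → ℚ) (hw : ∀ u v, 0 ≤ w u v) (l : List V) :
    0 ≤ pathWeight w l := by
  apply List.prod_nonneg
  intro a ha
  simp only [List.mem_map] at ha
  obtain ⟨p, -, rfl⟩ := ha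
  exact hw _ _

lemma chain'_split {E : V → V → Prop} (a : List V) (v : V) (b : List V) :
    List.Chain' E (a ++ v :: b) ↔ List.Chain' E (a ++ [v]) ∧ List.Chain' E (v :: b) := by
  have h1 : a ++ v :: b = (a ++ [v]) ++ b := by simp
  have h2 : (a ++ [v]).getLast? = some v := by simp
  show List.IsChain E (a ++ v :: b) ↔ List.IsChain E (a ++ [v]) ∧ List.IsChain E (v :: b)
  rw [h1, List.isChain_append, h2, List.isChain_cons]
  constructor
  · rintro ⟨hc, hb, hr⟩
    exact ⟨hc, fun y hy => hr v rfl y hy, hb⟩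
  · rintro ⟨hc, hr, hb⟩
    refine ⟨hc, hb, ?_⟩
    intro x hx y hy
    simp only [Option.mem_def, Option.some.injEq] at hx
    subst hx
    exact hr y hy

lemma head?_split (a : List V) (v : V) (b c : List V) :
    (a ++ v :: b).head? = (a ++ v :: c).head? := by
  cases a <;> simp

lemma getLast?_cons_or (v : V) (b : List V) (o : Option V) :
    ((v :: b).getLast?).or o = (v :: b).getLast? := by
  induction b generalizing v with
  | nil => simp
  | cons y ys ih => rw [List.getLast?_cons_cons]; exact ih y

lemma getLast?_split (a c : List V) (v : V) (b : List V) :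
    (a ++ v :: b).getLast? = (c ++ v :: b).getLast? := by
  rw [List.getLast?_append, List.getLast?_append, getLast?_cons_or, getLast?_cons_or]

/-- split a list at the first element satisfying `p`. -/
def firstSplit (p : V → Bool) : List V → Option (List V × V × List V)
  | [] => none
  | x :: xs =>
    if p x then some ([], x, xs)
    else (firstSplit p xs).map fun q => (x :: q.1, q.2)

lemma firstSplit_of {p : V → Bool} {a : List V} {v : V} (b : List V)
    (ha : ∀ u ∈ a, p u = false) (hv : p v = true) :
    firstSplit p (a ++ v :: b) = some (a, v, b) := by
  induction a with
  | nil => simp [firstSplit, hv]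
  | cons x xs ih =>
    have hx : p x = false := ha x (by simp)
    have ihx := ih (fun u hu => ha u (by simp [hu]))
    simp [firstSplit, hx, ihx]

lemma firstSplit_spec {p : V → Bool} {l a : List V} {v : V} {b : List V}
    (h : firstSplit p l = some (a, v, b)) :
    l = a ++ v :: b ∧ p v = true ∧ ∀ u ∈ a, p u = false := by
  induction l generalizing a v b with
  | nil => simp [firstSplit] at h
  | cons x xs ih =>
    by_cases hx : p x = true
    · simp [firstSplit, hx] at h
      obtain ⟨h1, h2, h3⟩ := h
      subst h1; subst h2; subst h3
      exact ⟨rfl, hx, by simp⟩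
    · simp only [firstSplit, if_neg hx, Option.map_eq_some_iff] at h
      obtain ⟨⟨a', v', b'⟩, hq, he⟩ := h
      simp only [Prod.mk.injEq] at he
      obtain ⟨h1, h2, h3⟩ := he
      obtain ⟨hl, hv, hall⟩ := ih hq
      subst h2 h3
      refine ⟨?_, hv, ?_⟩
      · rw [← h1]; simp [hl]
      · rw [← h1]
        intro u hu
        rcases List.mem_cons.1 hu with rfl | hu
        · simpa using hx
        · exact hall u hu

lemma firstSplit_isSome {p : V → Bool} {l : List V} (h : ∃ x ∈ l, p x = true) :
    ∃ a v b, firstSplit p l = some (a, v, b) := by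
  induction l with
  | nil => simp at h
  | cons x xs ih =>
    by_cases hx : p x = true
    · exact ⟨[], x, xs, by simp [firstSplit, hx]⟩
    · obtain ⟨y, hy, hpy⟩ := h
      rcases List.mem_cons.1 hy with rfl | hy
      · exact absurd hpy hx
      · obtain ⟨a, v, b, hab⟩ := ih ⟨y, hy, hpy⟩
        exact ⟨x :: a, v, b, by simp [firstSplit, hx, hab]⟩


variable {k : ℕ}

/-- indices whose path meets some other path -/
def crossIdx (f : Fin k → List V) : Finset (Fin k) :=
  Finset.univ.filter fun i => ∃ j, j ≠ i ∧ ∃ v ∈ f i, v ∈ f j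

lemma mem_crossIdx {f : Fin k → List V} {i : Fin k} :
    i ∈ crossIdx f ↔ ∃ j, j ≠ i ∧ ∃ v ∈ f i, v ∈ f j := by
  simp [crossIdx]

def pred1 (f : Fin k → List V) (i : Fin k) (u : V) : Bool :=
  decide (∃ j, j ≠ i ∧ u ∈ f j)

def lgvCore (f : Fin k → List V) : Option (Fin k × Fin k × (Fin k → List V)) :=
  if h : (crossIdx f).Nonempty then
    let i0 := (crossIdx f).min' h
    (firstSplit (pred1 f i0) (f i0)).bind fun q =>
      if hJ : (Finset.univ.filter fun j => j ≠ i0 ∧ q.2.1 ∈ f j).Nonempty then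
        let j0 := (Finset.univ.filter fun j => j ≠ i0 ∧ q.2.1 ∈ f j).min' hJ
        (firstSplit (fun u => decide (u = q.2.1)) (f j0)).bind fun r =>
          some (i0, j0,
            Function.update (Function.update f i0 (q.1 ++ q.2.1 :: r.2.2)) j0
              (r.1 ++ q.2.1 :: q.2.2))
      else none
  else none

lemma lgvCore_eval (f : Fin k → List V) (h : (crossIdx f).Nonempty)
    {i0 j0 : Fin k} {A : List V} {v : V} {B C D : List V}
    (hmin : (crossIdx f).min' h = i0)
    (h1 : firstSplit (pred1 f i0) (f i0) = some (A, v, B))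
    (hJ : (Finset.univ.filter fun j => j ≠ i0 ∧ v ∈ f j).Nonempty)
    (hminJ : (Finset.univ.filter fun j => j ≠ i0 ∧ v ∈ f j).min' hJ = j0)
    (h2 : firstSplit (fun u => decide (u = v)) (f j0) = some (C, v, D)) :
    lgvCore f = some (i0, j0,
      Function.update (Function.update f i0 (A ++ v :: D)) j0 (C ++ v :: B)) := by
  rw [lgvCore, dif_pos h]
  simp only [hmin, h1, Option.bind_some]
  rw [dif_pos hJ]
  simp only [hminJ, h2, Option.bind_some]

theorem lgvCore_spec (f : Fin k → List V) (hnd : ∀ i, (f i).Nodup)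
    (hcross : ∃ i j, i ≠ j ∧ ∃ v ∈ f i, v ∈ f j) :
    ∃ (i0 j0 : Fin k) (A : List V) (v : V) (B C D : List V),
      i0 ≠ j0 ∧
      f i0 = A ++ v :: B ∧ f j0 = C ++ v :: D ∧
      lgvCore f = some (i0, j0,
        Function.update (Function.update f i0 (A ++ v :: D)) j0 (C ++ v :: B)) ∧
      lgvCore (Function.update (Function.update f i0 (A ++ v :: D)) j0 (C ++ v :: B))
        = some (i0, j0, f) := by
  classical
  obtain ⟨i, j, hij, v0, hv0i, hv0j⟩ := hcross
  have hne : (crossIdx f).Nonempty := ⟨i, mem_crossIdx.2 ⟨j, Ne.symm hij, v0, hv0i, hv0j⟩⟩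
  set i0 := (crossIdx f).min' hne with hi0def
  have hi0mem : i0 ∈ crossIdx f := Finset.min'_mem _ _
  have hmin : ∀ m ∈ crossIdx f, i0 ≤ m := fun m hm => Finset.min'_le _ _ hm
  obtain ⟨j1, hj1, u1, hu1i, hu1j⟩ := mem_crossIdx.1 hi0mem
  obtain ⟨A, v, B, h1⟩ := firstSplit_isSome (p := pred1 f i0) (l := f i0)
    ⟨u1, hu1i, by simp only [pred1, decide_eq_true_eq]; exact ⟨j1, hj1, hu1j⟩⟩
  obtain ⟨hfi0, hvtrue, hAfalse⟩ := firstSplit_spec h1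
  have hvex : ∃ j, j ≠ i0 ∧ v ∈ f j := by
    simpa only [pred1, decide_eq_true_eq] using hvtrue
  have hJne : (Finset.univ.filter fun j => j ≠ i0 ∧ v ∈ f j).Nonempty := by
    obtain ⟨j', hj', hvj'⟩ := hvex
    exact ⟨j', by simp [hj', hvj']⟩
  set j0 := (Finset.univ.filter fun j => j ≠ i0 ∧ v ∈ f j).min' hJne with hj0def
  have hj0mem : j0 ∈ Finset.univ.filter fun j => j ≠ i0 ∧ v ∈ f j := Finset.min'_mem _ _
  rw [Finset.mem_filter] at hj0mem
  obtain ⟨-, hj0ne, hvj0⟩ := hj0mem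
  have hJmin : ∀ j', j' ≠ i0 → v ∈ f j' → j0 ≤ j' := fun j' ha hb =>
    Finset.min'_le _ _ (by simp [ha, hb])
  obtain ⟨C, v', D, h2⟩ := firstSplit_isSome (p := fun u => decide (u = v)) (l := f j0)
    ⟨v, hvj0, by simp⟩
  obtain ⟨hfj0, hv'eq, hCfalse⟩ := firstSplit_spec h2
  have hv'v : v' = v := by simpa using hv'eq
  rw [hv'v] at h2
  rw [hv'v] at hfj0
  have hvC : v ∉ C := fun hc => by simpa using hCfalse v hc
  have hi0j0 : i0 ≠ j0 := Ne.symm hj0ne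
  have hvfi0 : v ∈ f i0 := by rw [hfi0]; simp
  have hi0lej0 : i0 ≤ j0 := hmin j0 (mem_crossIdx.2 ⟨i0, hi0j0, v, by rw [hfj0]; simp, hvfi0⟩)
  have hndi0 := hnd i0
  rw [hfi0, List.nodup_append] at hndi0
  have hdisj : ∀ u ∈ A, u ∉ v :: B := fun u hu h => hndi0.2.2 u hu u h rfl
  set g := Function.update (Function.update f i0 (A ++ v :: D)) j0 (C ++ v :: B) with hgdef
  have hgi0 : g i0 = A ++ v :: D := by
    rw [hgdef, Function.update_of_ne hi0j0, Function.update_self]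
  have hgj0 : g j0 = C ++ v :: B := by rw [hgdef, Function.update_self]
  have hgm : ∀ m, m ≠ i0 → m ≠ j0 → g m = f m := fun m ha hb => by
    rw [hgdef, Function.update_of_ne hb, Function.update_of_ne ha]
  have hvgi0 : v ∈ g i0 := by rw [hgi0]; simp
  have hvgj0 : v ∈ g j0 := by rw [hgj0]; simp
  have hevalf : lgvCore f = some (i0, j0, g) :=
    lgvCore_eval f hne hi0def.symm h1 hJne hj0def.symm h2
  have hgsub : ∀ n u, u ∈ g n → u ∈ f n ∨ u ∈ f i0 ∨ u ∈ f j0 := by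
    intro n u hu
    by_cases hn1 : n = j0
    · subst hn1; rw [hgj0] at hu
      rcases List.mem_append.1 hu with h | h
      · right; right; rw [hfj0]; exact List.mem_append.2 (Or.inl h)
      · rcases List.mem_cons.1 h with rfl | h
        · right; left; exact hvfi0
        · right; left; rw [hfi0]; simp [h]
    · by_cases hn2 : n = i0
      · subst hn2; rw [hgi0] at hu
        rcases List.mem_append.1 hu with h | h
        · right; left; rw [hfi0]; exact List.mem_append.2 (Or.inl h)
        · rcases List.mem_cons.1 h with rfl | h
          · right; left; exact hvfi0
          · right; right; rw [hfj0]; simp [h]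
      · left; rwa [hgm n hn2 hn1] at hu
  have hgcross_i0 : i0 ∈ crossIdx g := mem_crossIdx.2 ⟨j0, hj0ne, v, hvgi0, hvgj0⟩
  have hgne : (crossIdx g).Nonempty := ⟨i0, hgcross_i0⟩
  have hglb : ∀ m ∈ crossIdx g, i0 ≤ m := by
    intro m hm
    by_contra hlt
    push_neg at hlt
    have hmi0 : m ≠ i0 := ne_of_lt hlt
    have hmj0 : m ≠ j0 := ne_of_lt (lt_of_lt_of_le hlt hi0lej0)
    obtain ⟨n, hn, u, hum, hun⟩ := mem_crossIdx.1 hm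
    rw [hgm m hmi0 hmj0] at hum
    have hmf : m ∈ crossIdx f := by
      rcases hgsub n u hun with h | h | h
      · exact mem_crossIdx.2 ⟨n, hn, u, hum, h⟩
      · exact mem_crossIdx.2 ⟨i0, Ne.symm hmi0, u, hum, h⟩
      · exact mem_crossIdx.2 ⟨j0, Ne.symm hmj0, u, hum, h⟩
    exact absurd (hmin m hmf) (not_le.2 hlt)
  have hgmin : (crossIdx g).min' hgne = i0 :=
    le_antisymm (Finset.min'_le _ _ hgcross_i0) (hglb _ (Finset.min'_mem _ _))
  have hpredv : pred1 g i0 v = true := by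
    simp only [pred1, decide_eq_true_eq]
    exact ⟨j0, hj0ne, hvgj0⟩
  have hpredA : ∀ u ∈ A, pred1 g i0 u = false := by
    intro u hu
    simp only [pred1, decide_eq_false_iff_not]
    rintro ⟨j', hj', huj⟩
    have hAf : ¬ ∃ j'', j'' ≠ i0 ∧ u ∈ f j'' := by
      simpa only [pred1, decide_eq_false_iff_not] using hAfalse u hu
    by_cases hjj0 : j' = j0
    · subst hjj0
      rw [hgj0] at huj
      rcases List.mem_append.1 huj with h | h
      · exact hAf ⟨j0, hj0ne, by rw [hfj0]; exact List.mem_append.2 (Or.inl h)⟩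
      · exact hdisj u hu h
    · rw [hgm j' hj' hjj0] at huj
      exact hAf ⟨j', hj', huj⟩
  have hg1 : firstSplit (pred1 g i0) (g i0) = some (A, v, D) := by
    rw [hgi0]; exact firstSplit_of D hpredA hpredv
  have hJgne : (Finset.univ.filter fun j' => j' ≠ i0 ∧ v ∈ g j').Nonempty :=
    ⟨j0, by simp [hj0ne, hvgj0]⟩
  have hJglb : ∀ j', j' ≠ i0 → v ∈ g j' → j0 ≤ j' := by
    intro j' ha hb
    by_cases hjj0 : j' = j0
    · exact le_of_eq hjj0.symm
    · rw [hgm j' ha hjj0] at hb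
      exact hJmin j' ha hb
  have hJgmin : (Finset.univ.filter fun j' => j' ≠ i0 ∧ v ∈ g j').min' hJgne = j0 := by
    refine le_antisymm (Finset.min'_le _ _ (by simp [hj0ne, hvgj0])) ?_
    have hm := Finset.min'_mem _ hJgne
    rw [Finset.mem_filter] at hm
    exact hJglb _ hm.2.1 hm.2.2
  have hg2 : firstSplit (fun u => decide (u = v)) (g j0) = some (C, v, B) := by
    rw [hgj0]
    exact firstSplit_of B (fun u hu => decide_eq_false (fun h : u = v => hvC (h ▸ hu))) (by simp)
  have hback : Function.update (Function.update g i0 (A ++ v :: B)) j0 (C ++ v :: D) = f := by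
    funext m
    by_cases hm1 : m = j0
    · subst hm1; rw [Function.update_self, hfj0]
    · rw [Function.update_of_ne hm1]
      by_cases hm2 : m = i0
      · subst hm2; rw [Function.update_self, hfi0]
      · rw [Function.update_of_ne hm2, hgm m hm2 hm1]
  have hevalg : lgvCore g = some (i0, j0, f) := by
    have h := lgvCore_eval g hgne hgmin hg1 hJgne hJgmin hg2
    rwa [hback] at h
  exact ⟨i0, j0, A, v, B, C, D, hi0j0, hfi0, hfj0, hevalf, hevalg⟩

def lgvInv (x : Σ _ : Equiv.Perm (Fin k), (Fin k → List V)) :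
    Σ _ : Equiv.Perm (Fin k), (Fin k → List V) :=
  match lgvCore x.2 with
  | some (i, j, g) => ⟨x.1 * Equiv.swap i j, g⟩
  | none => x

lemma lgvInv_eval {x : Σ _ : Equiv.Perm (Fin k), (Fin k → List V)}
    {i j : Fin k} {g : Fin k → List V} (h : lgvCore x.2 = some (i, j, g)) :
    lgvInv x = ⟨x.1 * Equiv.swap i j, g⟩ := by
  rw [lgvInv, h]

def lgvF (w : V → V → ℚ) (x : Σ _ : Equiv.Perm (Fin k), (Fin k → List V)) : ℚ :=
  ((Equiv.Perm.sign x.1 : ℤ) : ℚ) * ∏ i, pathWeight w (x.2 i)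

end LGV

open LGV

/-- Lindström–Gessel–Viennot: for a finite acyclic weighted directed graph with
nonnegative weights, sources `s i` and sinks `t i`, such that any vertex-disjoint
path system necessarily realizes the identity permutation, the determinant of
the path-weight matrix equals the (nonnegative) sum over vertex-disjoint path
systems of the products of path weights. -/
theorem lindstrom_gessel_viennot
    {V : Type*} [DecidableEq V] (E : V → V → Prop) (w : V → V → ℚ)
    (hw : ∀ u v, 0 ≤ w u v)
    (hacyc : ∀ l : List V, List.Chain' E l → l.Nodup)
    (k : ℕ) (s t : Fin k → V)
    (Paths : Fin k → Fin k → Finset (List V))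
    (hPaths : ∀ i j (l : List V), l ∈ Paths i j ↔
      (List.Chain' E l ∧ l.head? = some (s i) ∧ l.getLast? = some (t j)))
    (Systems : Finset (Fin k → List V))
    (hSystems : ∀ f : Fin k → List V, f ∈ Systems ↔
      ((∀ i, f i ∈ Paths i i) ∧ ∀ i j, i ≠ j → ∀ v, v ∈ f i → v ∉ f j))
    (hnoncross : ∀ σ : Equiv.Perm (Fin k), ∀ f : Fin k → List V,
      (∀ i, f i ∈ Paths i (σ i)) → (∀ i j, i ≠ j → ∀ v, v ∈ f i → v ∉ f j) →
      σ = 1) :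
    (Matrix.of fun i j : Fin k => ∑ l ∈ Paths i j, pathWeight w l).det =
      (∑ f ∈ Systems, ∏ i : Fin k, pathWeight w (f i)) ∧
    0 ≤ (Matrix.of fun i j : Fin k => ∑ l ∈ Paths i j, pathWeight w l).det := by

  classical
  have key : (Matrix.of fun i j : Fin k => ∑ l ∈ Paths i j, pathWeight w l).det =
      ∑ f ∈ Systems, ∏ i : Fin k, pathWeight w (f i) := by
    set M : Matrix (Fin k) (Fin k) ℚ :=
      Matrix.of fun i j : Fin k => ∑ l ∈ Paths i j, pathWeight w l with hM
    set S : Finset (Σ _ : Equiv.Perm (Fin k), (Fin k → List V)) :=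
      (Finset.univ : Finset (Equiv.Perm (Fin k))).sigma
        (fun σ => Fintype.piFinset fun i => Paths i (σ i)) with hSdef
    set P : (Σ _ : Equiv.Perm (Fin k), (Fin k → List V)) → Prop :=
      fun x => ∃ i j, i ≠ j ∧ ∃ v ∈ x.2 i, v ∈ x.2 j with hPdef
    -- Step 1 : determinant as a sum over (permutation, path system) pairs
    have hterm : ∀ σ : Equiv.Perm (Fin k),
        ((Equiv.Perm.sign σ : ℤ) : ℚ) * ∏ i, M.transpose (σ i) i
          = ∑ p ∈ Fintype.piFinset (fun i => Paths i (σ i)), lgvF w ⟨σ, p⟩ := by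
      intro σ
      have ht : (∏ i, M.transpose (σ i) i)
          = ∑ p ∈ Fintype.piFinset (fun i => Paths i (σ i)), ∏ i, pathWeight w (p i) := by
        rw [show (∏ i, M.transpose (σ i) i)
            = ∏ i, ∑ l ∈ Paths i (σ i), pathWeight w l from rfl,
          Finset.prod_univ_sum]
      rw [ht, Finset.mul_sum]
      rfl
    have e1 : M.det = ∑ x ∈ S, lgvF w x := by
      calc M.det = ∑ σ : Equiv.Perm (Fin k),
            ((Equiv.Perm.sign σ : ℤ) : ℚ) * ∏ i, M.transpose (σ i) i := by
            rw [← Matrix.det_transpose M, Matrix.det_apply']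
        _ = ∑ σ : Equiv.Perm (Fin k),
              ∑ p ∈ Fintype.piFinset (fun i => Paths i (σ i)), lgvF w ⟨σ, p⟩ :=
            Finset.sum_congr rfl fun σ _ => hterm σ
        _ = ∑ x ∈ S, lgvF w x := by
            rw [Finset.sum_sigma' Finset.univ (fun σ => Fintype.piFinset fun i => Paths i (σ i))
              (fun σ p => lgvF w ⟨σ, p⟩)]
    have e2 := (Finset.sum_filter_add_sum_filter_not S P (lgvF w)).symm
    -- Step 2 : crossing systems cancel in pairs
    have e3 : ∑ x ∈ S.filter P, lgvF w x = 0 := by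
      have master : ∀ a ∈ S.filter P,
          (lgvF w a + lgvF w (lgvInv a) = 0) ∧ lgvInv a ≠ a ∧ lgvInv a ∈ S.filter P ∧
            lgvInv (lgvInv a) = a := by
        rintro ⟨σ, f⟩ ha
        rw [Finset.mem_filter] at ha
        obtain ⟨haS, haP⟩ := ha
        rw [hSdef, Finset.mem_sigma] at haS
        have hmem : ∀ i, f i ∈ Paths i (σ i) := fun i => Fintype.mem_piFinset.1 haS.2 i
        have hndf : ∀ i, (f i).Nodup := fun i => hacyc _ ((hPaths _ _ _).1 (hmem i)).1
        obtain ⟨i0, j0, A, v, B, C, D, hij, hfi0, hfj0, heval, hevalback⟩ :=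
          lgvCore_spec f hndf haP
        set g := Function.update (Function.update f i0 (A ++ v :: D)) j0 (C ++ v :: B)
          with hg
        have hInv : lgvInv ⟨σ, f⟩ = ⟨σ * Equiv.swap i0 j0, g⟩ := lgvInv_eval heval
        have hgi0 : g i0 = A ++ v :: D := by
          rw [hg, Function.update_of_ne hij, Function.update_self]
        have hgj0 : g j0 = C ++ v :: B := by rw [hg, Function.update_self]
        have hgm : ∀ m, m ≠ i0 → m ≠ j0 → g m = f m := fun m h1 h2 => by
          rw [hg, Function.update_of_ne h2, Function.update_of_ne h1]
        have hw2 : pathWeight w (g i0) * pathWeight w (g j0)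
            = pathWeight w (f i0) * pathWeight w (f j0) := by
          rw [hgi0, hgj0, hfi0, hfj0, pathWeight_split w A v D, pathWeight_split w C v B,
            pathWeight_split w A v B, pathWeight_split w C v D]
          ring
        have hj0mem : j0 ∈ Finset.univ.erase i0 :=
          Finset.mem_erase.2 ⟨Ne.symm hij, Finset.mem_univ _⟩
        have hprod : (∏ i, pathWeight w (g i)) = ∏ i, pathWeight w (f i) := by
          rw [← Finset.mul_prod_erase Finset.univ (fun i => pathWeight w (g i))
              (Finset.mem_univ i0),
            ← Finset.mul_prod_erase _ (fun i => pathWeight w (g i)) hj0mem,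
            ← Finset.mul_prod_erase Finset.univ (fun i => pathWeight w (f i))
              (Finset.mem_univ i0),
            ← Finset.mul_prod_erase _ (fun i => pathWeight w (f i)) hj0mem,
            ← mul_assoc, ← mul_assoc, hw2]
          congr 1
          refine Finset.prod_congr rfl fun m hm => ?_
          rw [Finset.mem_erase] at hm
          obtain ⟨hm2, hm1⟩ := hm
          rw [Finset.mem_erase] at hm1
          rw [hgm m hm1.1 hm2]
        have hsign : ((Equiv.Perm.sign (σ * Equiv.swap i0 j0) : ℤ) : ℚ)
            = -((Equiv.Perm.sign σ : ℤ) : ℚ) := by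
          rw [Equiv.Perm.sign_mul, Equiv.Perm.sign_swap hij]
          simp
        have hfc1 := (hPaths i0 (σ i0) (f i0)).1 (hmem i0)
        have hfc2 := (hPaths j0 (σ j0) (f j0)).1 (hmem j0)
        rw [hfi0] at hfc1
        rw [hfj0] at hfc2
        obtain ⟨hc1, hh1, hl1⟩ := hfc1
        obtain ⟨hc2, hh2, hl2⟩ := hfc2
        have hc1' := (chain'_split A v B).1 hc1
        have hc2' := (chain'_split C v D).1 hc2
        refine ⟨?_, ?_, ?_, ?_⟩
        · -- cancellation
          rw [hInv]
          show lgvF w ⟨σ, f⟩ + lgvF w ⟨σ * Equiv.swap i0 j0, g⟩ = 0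
          simp only [lgvF]
          rw [hsign, hprod]
          ring
        · -- not a fixed point
          rw [hInv]
          intro hcon
          have h1 : σ * Equiv.swap i0 j0 = σ := congrArg Sigma.fst hcon
          have h2 : Equiv.swap i0 j0 = 1 :=
            mul_left_cancel (a := σ) (by rw [mul_one]; exact h1)
          exact hij (Equiv.swap_eq_one_iff.mp h2)
        · -- stays in the crossing set
          rw [hInv, Finset.mem_filter]
          constructor
          · rw [hSdef, Finset.mem_sigma]
            refine ⟨Finset.mem_univ _, Fintype.mem_piFinset.2 ?_⟩
            intro m
            show g m ∈ Paths m ((σ * Equiv.swap i0 j0) m)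
            by_cases hm1 : m = i0
            · subst hm1
              have hσ : (σ * Equiv.swap m j0) m = σ j0 := by
                rw [Equiv.Perm.mul_apply, Equiv.swap_apply_left]
              rw [hσ, hgi0, hPaths]
              refine ⟨(chain'_split A v D).2 ⟨hc1'.1, hc2'.2⟩, ?_, ?_⟩
              · rw [head?_split A v D B]; exact hh1
              · rw [getLast?_split A C v D]; exact hl2
            · by_cases hm2 : m = j0
              · subst hm2
                have hσ : (σ * Equiv.swap i0 m) m = σ i0 := by
                  rw [Equiv.Perm.mul_apply, Equiv.swap_apply_right]
                rw [hσ, hgj0, hPaths]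
                refine ⟨(chain'_split C v B).2 ⟨hc2'.1, hc1'.2⟩, ?_, ?_⟩
                · rw [head?_split C v B D]; exact hh2
                · rw [getLast?_split C A v B]; exact hl1
              · have hσ : (σ * Equiv.swap i0 j0) m = σ m := by
                  rw [Equiv.Perm.mul_apply, Equiv.swap_apply_of_ne_of_ne hm1 hm2]
                rw [hσ, hgm m hm1 hm2]
                exact hmem m
          · simp only [hPdef]
            exact ⟨i0, j0, hij, v, by rw [hgi0]; simp, by rw [hgj0]; simp⟩
        · -- involution
          rw [hInv]
          have h2 : lgvInv ⟨σ * Equiv.swap i0 j0, g⟩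
              = ⟨σ * Equiv.swap i0 j0 * Equiv.swap i0 j0, f⟩ :=
            lgvInv_eval (x := ⟨σ * Equiv.swap i0 j0, g⟩) hevalback
          rw [h2, mul_assoc, Equiv.swap_mul_self, mul_one]
      refine Finset.sum_involution (fun a _ => lgvInv a)
        (fun a ha => (master a ha).1)
        (fun a ha _ => (master a ha).2.1)
        (fun a ha => (master a ha).2.2.1)
        (fun a ha => (master a ha).2.2.2)
    -- Step 3 : noncrossing systems are exactly `Systems` with the identity permutation
    have e4 : ∑ x ∈ S.filter (fun x => ¬ P x), lgvF w x
        = ∑ f ∈ Systems, ∏ i, pathWeight w (f i) := by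
      have hmemS : ∀ a : Σ _ : Equiv.Perm (Fin k), (Fin k → List V),
          a ∈ S.filter (fun x => ¬ P x) →
          (∀ i, a.2 i ∈ Paths i (a.1 i)) ∧ (∀ i j, i ≠ j → ∀ v, v ∈ a.2 i → v ∉ a.2 j) := by
        intro a ha
        rw [Finset.mem_filter] at ha
        obtain ⟨haS, haP⟩ := ha
        rw [hSdef, Finset.mem_sigma] at haS
        refine ⟨fun i => Fintype.mem_piFinset.1 haS.2 i, ?_⟩
        simp only [hPdef] at haP
        push_neg at haP
        exact haP
      have hone : ∀ a ∈ S.filter (fun x => ¬ P x), a.1 = 1 := fun a ha =>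
        hnoncross a.1 a.2 (hmemS a ha).1 (hmemS a ha).2
      refine Finset.sum_bij' (fun a _ => a.2) (fun f _ => ⟨1, f⟩) ?_ ?_ ?_ ?_ ?_
      · intro a ha
        rw [hSystems]
        refine ⟨fun i => ?_, (hmemS a ha).2⟩
        have h := (hmemS a ha).1 i
        rw [hone a ha] at h
        exact h
      · intro f hf
        rw [hSystems] at hf
        rw [Finset.mem_filter]
        constructor
        · rw [hSdef, Finset.mem_sigma]
          exact ⟨Finset.mem_univ _, Fintype.mem_piFinset.2 fun i => hf.1 i⟩
        · rw [hPdef]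
          rintro ⟨i, j, hij, v, hvi, hvj⟩
          exact hf.2 i j hij v hvi hvj
      · rintro ⟨σ, f⟩ ha
        have h2 : σ = 1 := hone ⟨σ, f⟩ ha
        subst h2
        rfl
      · intro f hf
        rfl
      · intro a ha
        simp only [lgvF, hone a ha]
        simp
    rw [e1, e2, e3, e4, zero_add]
  refine ⟨key, ?_⟩
  rw [key]
  exact Finset.sum_nonneg fun f _ =>
    Finset.prod_nonneg fun i _ => pathWeight_nonneg w hw _
end
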